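/- arXiv:2506.13929 — 6 statements merged into one kernel-verified Lean document; each statement's English description precedes it below -/
import Mathlib

section
/- Let Ω ⊆ ℝⁿ be a nonempty measurable set, K an admissible kernel which in addition satisfies ‖K(x,·) − K(x',·)‖_{L¹(Ω)} ≤ L_K |x − x'| for all x, x' ∈ Ω, and let ρ be a recognition function satisfying the coordination condition. Let u₀ : Ω → ℝ be bounded and Lipschitz with constant L₀, and let u be a solution of the initial value problem u_t = g[u] with initial datum u₀ on Ω × [0,T]. Set M := sup_{x∈Ω}|u₀(x)|, let W be an upper bound for |ρ'| on [−2M, 2M] and L_ρ a Lipschitz constant for ρ' on [−2M, 2M], and put c := L_ρ D and C := W L_K where D := sup_{x∈Ω} ‖K(x,·)‖_{L¹(Ω)}. Then for all x, x' ∈ Ω and all t ∈ [0,T], |u(x,t) − u(x',t)| ≤ |x − x'| (L₀ + C t) e^{c t}; in particular u(·,t) is Lipschitz continuous for each t. -/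
open MeasureTheory Set

lemma ftc_clamp0 {T : ℝ} (hT : 0 < T) {g : ℝ → ℝ} (hg : ContinuousOn g (Icc 0 T)) :
    ∀ t ∈ Icc (0:ℝ) T, HasDerivWithinAt (fun τ => ∫ s in (0:ℝ)..τ, g s) (g t) (Icc 0 T) t := by
  intro t ht
  set gc : ℝ → ℝ := fun s => g (min (max s 0) T) with hgc
  have hmaps : ∀ s : ℝ, min (max s 0) T ∈ Icc (0:ℝ) T :=
    fun s => ⟨le_min (le_max_right s 0) hT.le, min_le_right _ _⟩
  have hgccont : Continuous gc :=
    hg.comp_continuous ((continuous_id.max continuous_const).min continuous_const) hmaps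
  have heq : ∀ s ∈ Icc (0:ℝ) T, gc s = g s := fun s hs => by
    simp only [hgc, max_eq_left hs.1, min_eq_left hs.2]
  have hG : HasDerivAt (fun τ => ∫ s in (0:ℝ)..τ, gc s) (gc t) t :=
    (hgccont.integral_hasStrictDerivAt 0 t).hasDerivAt
  have hG' : HasDerivWithinAt (fun τ => ∫ s in (0:ℝ)..τ, gc s) (g t) (Icc 0 T) t := by
    rw [← heq t ht]; exact hG.hasDerivWithinAt
  refine hG'.congr (fun τ hτ => ?_) ?_
  · refine intervalIntegral.integral_congr (fun s hs => ?_)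
    rw [uIcc_of_le hτ.1] at hs
    exact (heq s ⟨hs.1, hs.2.trans hτ.2⟩).symm
  · refine intervalIntegral.integral_congr (fun s hs => ?_)
    rw [uIcc_of_le ht.1] at hs
    exact (heq s ⟨hs.1, hs.2.trans ht.2⟩).symm

lemma stmt6_cont_of_lip {φ : ℝ → ℝ}
    (h : ∀ R : ℝ, 0 < R → ∃ L : ℝ, ∀ a b : ℝ, |a| ≤ R → |b| ≤ R →
      |φ a - φ b| ≤ L * |a - b|) : Continuous φ := by
  rw [continuous_iff_continuousAt]
  intro a
  obtain ⟨L, hL⟩ := h (|a| + 1) (by positivity)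
  rw [Metric.continuousAt_iff]
  intro ε hε
  refine ⟨min 1 (ε / (|L| + 1)), lt_min one_pos (by positivity), ?_⟩
  intro b hb
  have hb1 : |b - a| < 1 := lt_of_lt_of_le (by rw [← Real.dist_eq]; exact hb) (min_le_left _ _)
  have hb2 : |b - a| < ε / (|L| + 1) :=
    lt_of_lt_of_le (by rw [← Real.dist_eq]; exact hb) (min_le_right _ _)
  have hbR : |b| ≤ |a| + 1 := by
    have := abs_sub_abs_le_abs_sub b a; linarith
  have h1 : |φ b - φ a| ≤ L * |b - a| := hL b a hbR (by linarith)
  have h2 : L * |b - a| ≤ |L| * |b - a| :=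
    mul_le_mul_of_nonneg_right (le_abs_self L) (abs_nonneg _)
  have h3 : |L| * |b - a| ≤ |L| * (ε / (|L| + 1)) :=
    mul_le_mul_of_nonneg_left hb2.le (abs_nonneg _)
  have hpos : (0:ℝ) < |L| + 1 := by positivity
  have h5 : ε / (|L| + 1) * (|L| + 1) = ε := div_mul_cancel₀ _ hpos.ne'
  have hq : 0 < ε / (|L| + 1) := by positivity
  have h4 : |L| * (ε / (|L| + 1)) < ε := by nlinarith
  rw [Real.dist_eq]
  linarith


lemma stmt6_gronwallBound_le {δ c ε t : ℝ} (hδ : 0 ≤ δ) (hc : 0 ≤ c) (hε : 0 ≤ ε) (ht : 0 ≤ t) :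
    gronwallBound δ c ε t ≤ (δ + ε * t) * Real.exp (c * t) := by
  rcases eq_or_lt_of_le hc with hc0 | hc0
  · rw [← hc0]
    simp [gronwallBound]
  · have hcne : c ≠ 0 := ne_of_gt hc0
    rw [gronwallBound_of_K_ne_0 hcne]
    have hE := Real.exp_pos (c * t)
    have h1 : (1 - c * t) * Real.exp (c * t) ≤ 1 := by
      have h2 := Real.add_one_le_exp (-(c * t))
      have h3 : Real.exp (-(c * t)) * Real.exp (c * t) = 1 := by rw [← Real.exp_add]; simp
      nlinarith
    have h4 : Real.exp (c * t) - 1 ≤ c * t * Real.exp (c * t) := by nlinarith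
    have h5 : ε / c * (Real.exp (c * t) - 1) ≤ ε * t * Real.exp (c * t) := by
      have h6 : ε / c * (Real.exp (c * t) - 1) ≤ ε / c * (c * t * Real.exp (c * t)) :=
        mul_le_mul_of_nonneg_left h4 (by positivity)
      have h7 : ε / c * (c * t * Real.exp (c * t)) = ε * t * Real.exp (c * t) := by
        field_simp
      linarith
    have h8 : (δ + ε * t) * Real.exp (c * t) = δ * Real.exp (c * t) + ε * t * Real.exp (c * t) :=
      by ring
    linarith

lemma core_int
    (n : ℕ) (Ω : Set (EuclideanSpace ℝ (Fin n))) (hΩmeas : MeasurableSet Ω)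
    (K : EuclideanSpace ℝ (Fin n) → EuclideanSpace ℝ (Fin n) → ℝ)
    (hKnonneg : ∀ x y, 0 ≤ K x y) (hKint : ∀ x ∈ Ω, IntegrableOn (K x) Ω)
    (σ : ℝ → ℝ) (hσc : Continuous σ)
    (T : ℝ) (u : EuclideanSpace ℝ (Fin n) → ℝ → ℝ)
    (hucont : ContinuousOn (fun p : EuclideanSpace ℝ (Fin n) × ℝ => u p.1 p.2) (Ω ×ˢ Icc 0 T))
    (B' : ℝ)
    (hB' : ∀ x ∈ Ω, ∀ y ∈ Ω, ∀ t ∈ Icc (0:ℝ) T, |σ (u x t - u y t)| ≤ B') :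
    ∀ x ∈ Ω, ∀ t ∈ Icc (0:ℝ) T,
      IntegrableOn (fun y => K x y * σ (u x t - u y t)) Ω := by
  intro x hx t ht
  have hu_x : ContinuousOn (fun y => u y t) Ω :=
    hucont.comp (continuous_id.prodMk continuous_const).continuousOn (fun y hy => ⟨hy, ht⟩)
  have hmeas : AEStronglyMeasurable (fun y => K x y * σ (u x t - u y t)) (volume.restrict Ω) :=
    (hKint x hx).aestronglyMeasurable.mul
      ((hσc.comp_continuousOn (continuousOn_const.sub hu_x)).aestronglyMeasurable hΩmeas)
  refine Integrable.mono' ((hKint x hx).mul_const B') hmeas ?_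
  filter_upwards [ae_restrict_mem hΩmeas] with y hy
  rw [Real.norm_eq_abs, abs_mul, abs_of_nonneg (hKnonneg x y)]
  exact mul_le_mul_of_nonneg_left (hB' x hx y hy t ht) (hKnonneg x y)


lemma core_deriv
    (n : ℕ) (Ω : Set (EuclideanSpace ℝ (Fin n))) (hΩmeas : MeasurableSet Ω)
    (K : EuclideanSpace ℝ (Fin n) → EuclideanSpace ℝ (Fin n) → ℝ)
    (hKnonneg : ∀ x y, 0 ≤ K x y) (hKint : ∀ x ∈ Ω, IntegrableOn (K x) Ω)
    (σ : ℝ → ℝ) (hσc : Continuous σ)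
    (T : ℝ) (hT : 0 < T) (u : EuclideanSpace ℝ (Fin n) → ℝ → ℝ)
    (hucont : ContinuousOn (fun p : EuclideanSpace ℝ (Fin n) × ℝ => u p.1 p.2) (Ω ×ˢ Icc 0 T))
    (B' : ℝ)
    (hB' : ∀ x ∈ Ω, ∀ y ∈ Ω, ∀ t ∈ Icc (0:ℝ) T, |σ (u x t - u y t)| ≤ B')
    (hueq : ∀ x ∈ Ω, ∀ t ∈ Icc (0:ℝ) T,
      u x t = u x 0 + ∫ s in (0:ℝ)..t, ∫ y in Ω, K x y * σ (u x s - u y s)) :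
    ∀ x ∈ Ω, ∀ t ∈ Icc (0:ℝ) T,
      HasDerivWithinAt (u x) (∫ y in Ω, K x y * σ (u x t - u y t)) (Icc 0 T) t := by
  intro x hx
  have hu_t : ∀ y ∈ Ω, ContinuousOn (fun s => u y s) (Icc 0 T) := by
    intro y hy
    exact hucont.comp (continuous_const.prodMk continuous_id).continuousOn
      (fun s hs => ⟨hy, hs⟩)
  have hu_x : ∀ t ∈ Icc (0:ℝ) T, ContinuousOn (fun y => u y t) Ω := by
    intro t ht
    exact hucont.comp (continuous_id.prodMk continuous_const).continuousOn
      (fun y hy => ⟨hy, ht⟩)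
  set g : ℝ → ℝ := fun s => ∫ y in Ω, K x y * σ (u x s - u y s) with hgdef
  have hmeas : ∀ s ∈ Icc (0:ℝ) T,
      AEStronglyMeasurable (fun y => K x y * σ (u x s - u y s)) (volume.restrict Ω) := by
    intro s hs
    refine (hKint x hx).aestronglyMeasurable.mul ?_
    refine ContinuousOn.aestronglyMeasurable ?_ hΩmeas
    exact hσc.comp_continuousOn (continuousOn_const.sub (hu_x s hs))
  have hgcont : ContinuousOn g (Icc 0 T) := by
    intro s₀ hs₀
    refine continuousWithinAt_of_dominated (bound := fun y => K x y * B')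
      ?_ ?_ ((hKint x hx).mul_const B') ?_
    · exact (eventually_mem_nhdsWithin).mono (fun s hs => hmeas s hs)
    · refine (eventually_mem_nhdsWithin).mono (fun s hs => ?_)
      filter_upwards [ae_restrict_mem hΩmeas] with y hy
      rw [Real.norm_eq_abs, abs_mul, abs_of_nonneg (hKnonneg x y)]
      exact mul_le_mul_of_nonneg_left (hB' x hx y hy s hs) (hKnonneg x y)
    · filter_upwards [ae_restrict_mem hΩmeas] with y hy
      have h1 : ContinuousWithinAt (fun s => σ (u x s - u y s)) (Icc 0 T) s₀ :=
        hσc.continuousAt.comp_continuousWithinAt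
          ((hu_t x hx s₀ hs₀).sub ((hu_t y hy) s₀ hs₀))
      exact h1.const_mul _
  intro t ht
  have hG := ftc_clamp0 hT hgcont t ht
  have : HasDerivWithinAt (fun τ => u x 0 + ∫ s in (0:ℝ)..τ, g s) (g t) (Icc 0 T) t :=
    hG.const_add (u x 0)
  exact this.congr (fun τ hτ => hueq x hx τ hτ) (hueq x hx t ht)

lemma aux_max
    (n : ℕ) (Ω : Set (EuclideanSpace ℝ (Fin n))) (hΩne : Ω.Nonempty) (hΩmeas : MeasurableSet Ω)
    (K : EuclideanSpace ℝ (Fin n) → EuclideanSpace ℝ (Fin n) → ℝ)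
    (hKnonneg : ∀ x y, 0 ≤ K x y) (hKint : ∀ x ∈ Ω, IntegrableOn (K x) Ω)
    (D : ℝ) (hD : ∀ x ∈ Ω, (∫ y in Ω, K x y) ≤ D)
    (σ : ℝ → ℝ) (hσc : Continuous σ) (hσnonpos : ∀ z : ℝ, 0 ≤ z → σ z ≤ 0)
    (T : ℝ) (hT : 0 < T) (u : EuclideanSpace ℝ (Fin n) → ℝ → ℝ)
    (hucont : ContinuousOn (fun p : EuclideanSpace ℝ (Fin n) × ℝ => u p.1 p.2) (Ω ×ˢ Icc 0 T))
    (Mu : ℝ) (hMu : 0 ≤ Mu) (hubd : ∀ x ∈ Ω, ∀ t ∈ Icc (0:ℝ) T, |u x t| ≤ Mu)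
    (L' : ℝ) (hL' : 0 ≤ L')
    (hσlip : ∀ a b : ℝ, |a| ≤ 2*Mu → |b| ≤ 2*Mu → |σ a - σ b| ≤ L' * |a - b|)
    (M : ℝ) (hM : 0 ≤ M) (hu0 : ∀ x ∈ Ω, u x 0 ≤ M)
    (hueq : ∀ x ∈ Ω, ∀ t ∈ Icc (0:ℝ) T,
      u x t = u x 0 + ∫ s in (0:ℝ)..t, ∫ y in Ω, K x y * σ (u x s - u y s)) :
    ∀ x ∈ Ω, ∀ t ∈ Icc (0:ℝ) T, u x t ≤ M := by
  obtain ⟨x₀, hx₀⟩ := hΩne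
  have hD0 : 0 ≤ D :=
    le_trans (setIntegral_nonneg hΩmeas (fun y _ => hKnonneg x₀ y)) (hD x₀ hx₀)
  have habs : ∀ a b : ℝ, |a - b| ≤ |a| + |b| := fun a b => by
    rw [sub_eq_add_neg]
    exact (abs_add_le a (-b)).trans (by rw [abs_neg])
  have habs2 : ∀ x ∈ Ω, ∀ y ∈ Ω, ∀ t ∈ Icc (0:ℝ) T, |u x t - u y t| ≤ 2 * Mu := by
    intro x hx y hy t ht
    have := habs (u x t) (u y t)
    have h1 := hubd x hx t ht
    have h2 := hubd y hy t ht
    linarith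
  set B' : ℝ := |σ 0| + L' * (2 * Mu) with hB'def
  have hB'0 : 0 ≤ B' := by positivity
  have hB' : ∀ x ∈ Ω, ∀ y ∈ Ω, ∀ t ∈ Icc (0:ℝ) T, |σ (u x t - u y t)| ≤ B' := by
    intro x hx y hy t ht
    have h0 : |(0:ℝ)| ≤ 2 * Mu := by simpa using (by positivity : (0:ℝ) ≤ 2 * Mu)
    have hlip := hσlip (u x t - u y t) 0 (habs2 x hx y hy t ht) h0
    have h3 : |σ (u x t - u y t)| ≤ |σ (u x t - u y t) - σ 0| + |σ 0| :=
      sub_le_iff_le_add.mp (abs_sub_abs_le_abs_sub _ _)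
    have h4 : L' * |u x t - u y t - 0| ≤ L' * (2 * Mu) := by
      rw [sub_zero]
      exact mul_le_mul_of_nonneg_left (habs2 x hx y hy t ht) hL'
    rw [hB'def]; linarith
  have hderiv := core_deriv n Ω hΩmeas K hKnonneg hKint σ hσc T hT u hucont B' hB' hueq
  have hint := core_int n Ω hΩmeas K hKnonneg hKint σ hσc T u hucont B' hB'
  set g : EuclideanSpace ℝ (Fin n) → ℝ → ℝ :=
    fun x t => ∫ y in Ω, K x y * σ (u x t - u y t) with hgdef
  have hgbd : ∀ x ∈ Ω, ∀ t ∈ Icc (0:ℝ) T, |g x t| ≤ B' * D := by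
    intro x hx t ht
    have h1 : |g x t| ≤ ∫ y in Ω, |K x y * σ (u x t - u y t)| := by
      simpa only [Real.norm_eq_abs] using
        norm_integral_le_integral_norm (μ := volume.restrict Ω)
          (f := fun y => K x y * σ (u x t - u y t))
    have h2 : (∫ y in Ω, |K x y * σ (u x t - u y t)|) ≤ ∫ y in Ω, K x y * B' := by
      refine setIntegral_mono_on (hint x hx t ht).abs ((hKint x hx).mul_const B') hΩmeas ?_
      intro y hy
      rw [abs_mul, abs_of_nonneg (hKnonneg x y)]
      exact mul_le_mul_of_nonneg_left (hB' x hx y hy t ht) (hKnonneg x y)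
    have h3 : (∫ y in Ω, K x y * B') = (∫ y in Ω, K x y) * B' := integral_mul_const _ _
    have h4 : (∫ y in Ω, K x y) * B' ≤ D * B' :=
      mul_le_mul_of_nonneg_right (hD x hx) hB'0
    calc |g x t| ≤ ∫ y in Ω, K x y * B' := h1.trans h2
      _ = (∫ y in Ω, K x y) * B' := h3
      _ ≤ D * B' := h4
      _ = B' * D := mul_comm _ _
  have hulip : ∀ x ∈ Ω, ∀ s ∈ Icc (0:ℝ) T, ∀ t ∈ Icc (0:ℝ) T,
      |u x t - u x s| ≤ (B' * D) * |t - s| := by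
    intro x hx s hs t ht
    have := Convex.norm_image_sub_le_of_norm_hasDerivWithin_le
      (f := u x) (f' := g x) (C := B' * D)
      (fun τ hτ => hderiv x hx τ hτ)
      (fun τ hτ => by rw [Real.norm_eq_abs]; exact hgbd x hx τ hτ)
      (convex_Icc 0 T) hs ht
    simpa [Real.norm_eq_abs] using this
  -- sup function
  have hu_tc : ∀ x ∈ Ω, ContinuousOn (fun s => u x s) (Icc 0 T) := by
    intro x hx
    exact hucont.comp (continuous_const.prodMk continuous_id).continuousOn
      (fun s hs => ⟨hx, hs⟩)
  set b : ℝ → ℝ := fun t => sSup ((fun y => max (u y t - M) 0) '' Ω) with hbdef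
  have hmemb : ∀ t ∈ Icc (0:ℝ) T, ∀ z ∈ (fun y => max (u y t - M) 0) '' Ω, z ≤ Mu := by
    rintro t ht z ⟨y, hy, rfl⟩
    refine max_le ?_ hMu
    have := (abs_le.mp (hubd y hy t ht)).2
    linarith
  have hbdd : ∀ t ∈ Icc (0:ℝ) T, BddAbove ((fun y => max (u y t - M) 0) '' Ω) :=
    fun t ht => ⟨Mu, fun z hz => hmemb t ht z hz⟩
  have hble : ∀ y ∈ Ω, ∀ t ∈ Icc (0:ℝ) T, max (u y t - M) 0 ≤ b t :=
    fun y hy t ht => le_csSup (hbdd t ht) (mem_image_of_mem _ hy)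
  have hb0 : ∀ t ∈ Icc (0:ℝ) T, 0 ≤ b t :=
    fun t ht => le_trans (le_max_right _ 0) (hble x₀ hx₀ t ht)
  have hCL : 0 ≤ B' * D := mul_nonneg hB'0 hD0
  have hblip : ∀ s ∈ Icc (0:ℝ) T, ∀ t ∈ Icc (0:ℝ) T, b t ≤ b s + (B' * D) * |t - s| := by
    intro s hs t ht
    refine csSup_le (Set.Nonempty.image _ ⟨x₀, hx₀⟩) ?_
    rintro z ⟨y, hy, rfl⟩
    have h1 := hulip y hy s hs t ht
    have h2 := hble y hy s hs
    have h3 : u y t - M ≤ max (u y s - M) 0 + (B' * D) * |t - s| := by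
      have := le_max_left (u y s - M) 0
      have := le_abs_self (u y t - u y s)
      linarith
    have h4 : (0:ℝ) ≤ max (u y s - M) 0 + (B' * D) * |t - s| :=
      add_nonneg (le_max_right _ 0) (mul_nonneg hCL (abs_nonneg _))
    have := max_le h3 h4
    linarith
  have hbcont : ContinuousOn b (Icc 0 T) := by
    have hlip : LipschitzOnWith (Real.toNNReal (B' * D)) b (Icc 0 T) := by
      refine LipschitzOnWith.of_dist_le_mul ?_
      intro t ht s hs
      rw [Real.dist_eq, Real.dist_eq, Real.coe_toNNReal _ hCL]
      refine abs_le.mpr ⟨?_, ?_⟩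
      · have := hblip t ht s hs
        rw [abs_sub_comm] at this
        linarith
      · have := hblip s hs t ht
        linarith
    exact hlip.continuousOn
  set c' : ℝ := D * L' with hc'def
  have hc'0 : 0 ≤ c' := mul_nonneg hD0 hL'
  set F : ℝ → ℝ := fun t => c' * ∫ s in (0:ℝ)..t, b s with hFdef
  have hFderiv : ∀ t ∈ Icc (0:ℝ) T, HasDerivWithinAt F (c' * b t) (Icc 0 T) t :=
    fun t ht => (ftc_clamp0 hT hbcont t ht).const_mul c'
  have hFcont : ContinuousOn F (Icc 0 T) := fun t ht => (hFderiv t ht).continuousWithinAt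
  have hF0 : ∀ t ∈ Icc (0:ℝ) T, 0 ≤ F t := by
    intro t ht
    refine mul_nonneg hc'0 ?_
    exact intervalIntegral.integral_nonneg ht.1 (fun s hs => hb0 s ⟨hs.1, hs.2.trans ht.2⟩)
  have hF00 : F 0 = 0 := by simp [hFdef]
  have hIcc_mem : ∀ t ∈ Ico (0:ℝ) T, Icc (0:ℝ) T ∈ nhdsWithin t (Ici t) := by
    intro t ht
    refine mem_nhdsWithin.mpr ⟨Iio T, isOpen_Iio, ht.2, ?_⟩
    rintro s ⟨hs1, hs2⟩
    exact ⟨ht.1.trans hs2, hs1.le⟩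
  have key : ∀ x ∈ Ω, ∀ t ∈ Icc (0:ℝ) T, u x t ≤ M + F t := by
    intro x hx t ht
    have hin : ∀ ε : ℝ, 0 < ε → u x t ≤ M + F t + ε * (t + 1) := by
      intro ε hε
      have hband : ∀ τ ∈ Icc (0:ℝ) T, u x τ ≤ M + F τ + ε * (τ + 1) := by
        refine image_le_of_deriv_right_lt_deriv_boundary'
          (f := u x) (f' := g x)
          (B := fun τ => M + F τ + ε * (τ + 1)) (B' := fun τ => c' * b τ + ε)
          (hu_tc x hx) ?_ ?_ ?_ ?_ ?_
        · intro τ hτ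
          exact (hderiv x hx τ (Ico_subset_Icc_self hτ)).mono_of_mem_nhdsWithin (hIcc_mem τ hτ)
        · show u x 0 ≤ M + F 0 + ε * (0 + 1)
          have h := hu0 x hx
          rw [hF00]
          nlinarith
        · refine (continuousOn_const.add hFcont).add ?_
          exact (continuous_const.mul (continuous_id.add continuous_const)).continuousOn
        · intro τ hτ
          have h1 : HasDerivWithinAt (fun τ => M + F τ) (c' * b τ) (Ici τ) τ :=
            ((hFderiv τ (Ico_subset_Icc_self hτ)).mono_of_mem_nhdsWithin (hIcc_mem τ hτ)).const_add M
          have h2 : HasDerivWithinAt (fun τ : ℝ => ε * (τ + 1)) ε (Ici τ) τ := by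
            simpa using (((hasDerivAt_id τ).add_const 1).const_mul ε).hasDerivWithinAt
          exact h1.add h2
        · intro τ hτ htouch
          have htouch' : u x τ = M + F τ + ε * (τ + 1) := htouch
          have hτIcc := Ico_subset_Icc_self hτ
          have hFτ := hF0 τ hτIcc
          have hxtM : M < u x τ := by nlinarith [hτ.1, hF0 τ hτIcc]
          have hpt : ∀ y ∈ Ω, σ (u x τ - u y τ) ≤ L' * b τ := by
            intro y hy
            rcases le_or_gt (u y τ) (u x τ) with h | h
            · exact (hσnonpos _ (sub_nonneg.2 h)).trans
                (mul_nonneg hL' (hb0 τ hτIcc))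
            · have h0 : |(0:ℝ)| ≤ 2 * Mu := by
                simpa using (by positivity : (0:ℝ) ≤ 2 * Mu)
              have hlip := hσlip (u x τ - u y τ) 0 (habs2 x hx y hy τ hτIcc) h0
              rw [sub_zero] at hlip
              have hσ0 : σ 0 ≤ 0 := hσnonpos 0 le_rfl
              have habsz : |u x τ - u y τ| = u y τ - u x τ := by
                rw [abs_of_neg (by linarith)]; ring
              have h5 : σ (u x τ - u y τ) ≤ σ 0 + L' * (u y τ - u x τ) := by
                have := (abs_le.mp hlip).2
                rw [habsz] at this
                linarith
              have h6 : u y τ - u x τ ≤ u y τ - M := by linarith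
              have h7 : u y τ - M ≤ max (u y τ - M) 0 := le_max_left _ _
              have h8 := hble y hy τ hτIcc
              nlinarith
          have hgle : g x τ ≤ D * (L' * b τ) := by
            have hmono : g x τ ≤ ∫ y in Ω, K x y * (L' * b τ) := by
              refine setIntegral_mono_on (hint x hx τ hτIcc)
                ((hKint x hx).mul_const _) hΩmeas ?_
              intro y hy
              exact mul_le_mul_of_nonneg_left (hpt y hy) (hKnonneg x y)
            have heq : (∫ y in Ω, K x y * (L' * b τ)) = (∫ y in Ω, K x y) * (L' * b τ) :=
              integral_mul_const _ _
            have hle2 : (∫ y in Ω, K x y) * (L' * b τ) ≤ D * (L' * b τ) :=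
              mul_le_mul_of_nonneg_right (hD x hx) (mul_nonneg hL' (hb0 τ hτIcc))
            calc g x τ ≤ _ := hmono
              _ = _ := heq
              _ ≤ _ := hle2
          have heqc : D * (L' * b τ) = c' * b τ := by rw [hc'def]; ring
          show g x τ < c' * b τ + ε
          linarith
      exact hband t ht
    refine le_of_forall_pos_le_add ?_
    intro ε' hε'
    have ht1 : (0:ℝ) < t + 1 := by linarith [ht.1]
    have hT1 : (0:ℝ) < T + 1 := by linarith
    have hεpos : 0 < ε' / (T + 1) := div_pos hε' hT1
    have := hin (ε' / (T + 1)) hεpos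
    have hmul : ε' / (T + 1) * (t + 1) ≤ ε' := by
      rw [div_mul_eq_mul_div, div_le_iff₀ hT1]
      have : t + 1 ≤ T + 1 := by linarith [ht.2]
      nlinarith
    linarith
  have hbF : ∀ t ∈ Icc (0:ℝ) T, b t ≤ F t := by
    intro t ht
    refine csSup_le (Set.Nonempty.image _ ⟨x₀, hx₀⟩) ?_
    rintro z ⟨y, hy, rfl⟩
    exact max_le (by linarith [key y hy t ht]) (hF0 t ht)
  have hgron : ∀ t ∈ Icc (0:ℝ) T, ‖F t‖ ≤ gronwallBound 0 c' 0 (t - 0) := by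
    refine norm_le_gronwallBound_of_norm_deriv_right_le (f' := fun t => c' * b t)
      hFcont ?_ (by simp [hF00]) ?_
    · intro t ht
      exact (hFderiv t (Ico_subset_Icc_self ht)).mono_of_mem_nhdsWithin (hIcc_mem t ht)
    · intro t ht
      have htIcc := Ico_subset_Icc_self ht
      rw [Real.norm_eq_abs, Real.norm_eq_abs, abs_of_nonneg (mul_nonneg hc'0 (hb0 t htIcc))]
      have h1 : c' * b t ≤ c' * F t := mul_le_mul_of_nonneg_left (hbF t htIcc) hc'0
      have h2 : F t ≤ |F t| := le_abs_self _
      nlinarith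
  intro x hx t ht
  have h1 := hgron t ht
  have h2 : gronwallBound 0 c' 0 (t - 0) = 0 := by
    by_cases hc : c' = 0 <;> simp [gronwallBound, hc]
  rw [h2, Real.norm_eq_abs] at h1
  have : F t ≤ 0 := (le_abs_self _).trans h1
  linarith [key x hx t ht]

/-- Spatial regularity for the coordination game.  If additionally
`‖K(x,·) − K(x',·)‖_{L¹(Ω)} ≤ L_K |x − x'|`, `u₀` is bounded and `L₀`-Lipschitz, `M` bounds
`|u₀|`, `W` bounds `|ρ'|` and `L_ρ` is a Lipschitz constant for `ρ'` on `[−2M,2M]`, and `u`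
solves the IVP on `Ω × [0,T]`, then with `c := L_ρ D` and `C := W L_K`,
`|u(x,t) − u(x',t)| ≤ |x − x'| (L₀ + C t) e^{c t}` for all `x, x' ∈ Ω`, `t ∈ [0,T]`. -/
theorem statement6
    (n : ℕ) (Ω : Set (EuclideanSpace ℝ (Fin n)))
    (hΩne : Ω.Nonempty) (hΩmeas : MeasurableSet Ω)
    -- `K` is an admissible kernel, Lipschitz in the first variable in the `L¹` sense:
    (K : EuclideanSpace ℝ (Fin n) → EuclideanSpace ℝ (Fin n) → ℝ)
    (hKnonneg : ∀ x y, 0 ≤ K x y)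
    (hKmeas : Measurable (Function.uncurry K))
    (hKint : ∀ x ∈ Ω, IntegrableOn (K x) Ω)
    (hKcont : ∀ x ∈ Ω, ∀ ε > (0:ℝ), ∃ δ > (0:ℝ), ∀ x' ∈ Ω, dist x' x < δ →
        (∫ y in Ω, |K x' y - K x y|) < ε)
    (D : ℝ) (hD : ∀ x ∈ Ω, (∫ y in Ω, K x y) ≤ D)
    (L_K : ℝ) (hKlip : ∀ x ∈ Ω, ∀ x' ∈ Ω, (∫ y in Ω, |K x y - K x' y|) ≤ L_K * dist x x')
    -- `ρ` is a recognition function satisfying the coordination condition: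
    (ρ : ℝ → ℝ) (hρ : Differentiable ℝ ρ)
    (hρ'lip : ∀ R : ℝ, 0 < R → ∃ L : ℝ, ∀ a b : ℝ, |a| ≤ R → |b| ≤ R →
        |deriv ρ a - deriv ρ b| ≤ L * |a - b|)
    (hcoord_pos : ∀ z : ℝ, 0 ≤ z → deriv ρ z ≤ 0)
    (hcoord_neg : ∀ z : ℝ, z ≤ 0 → 0 ≤ deriv ρ z)
    -- `u₀` bounded and Lipschitz with constant `L₀`; `M` bounds `|u₀|`:
    (u₀ : EuclideanSpace ℝ (Fin n) → ℝ)
    (L₀ : ℝ) (hu₀lip : ∀ x ∈ Ω, ∀ x' ∈ Ω, |u₀ x - u₀ x'| ≤ L₀ * dist x x')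
    (M : ℝ) (hu₀bd : ∀ x ∈ Ω, |u₀ x| ≤ M)
    -- `W` bounds `|ρ'|` and `L_ρ` is a Lipschitz constant for `ρ'` on `[−2M, 2M]`:
    (W : ℝ) (hW : ∀ z : ℝ, |z| ≤ 2 * M → |deriv ρ z| ≤ W)
    (L_ρ : ℝ) (hLρ : ∀ a b : ℝ, |a| ≤ 2 * M → |b| ≤ 2 * M →
        |deriv ρ a - deriv ρ b| ≤ L_ρ * |a - b|)
    -- `u` solves the IVP on `Ω × [0,T]`:
    (T : ℝ) (hT : 0 < T)
    (u : EuclideanSpace ℝ (Fin n) → ℝ → ℝ)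
    (hucont : ContinuousOn (fun p : EuclideanSpace ℝ (Fin n) × ℝ => u p.1 p.2) (Ω ×ˢ Icc 0 T))
    (hubd : ∃ Mu : ℝ, ∀ x ∈ Ω, ∀ t ∈ Icc (0:ℝ) T, |u x t| ≤ Mu)
    (hueq : ∀ x ∈ Ω, ∀ t ∈ Icc (0:ℝ) T,
        u x t = u₀ x + ∫ s in (0:ℝ)..t, ∫ y in Ω, K x y * deriv ρ (u x s - u y s)) :
    ∀ x ∈ Ω, ∀ x' ∈ Ω, ∀ t ∈ Icc (0:ℝ) T,
      |u x t - u x' t| ≤ dist x x' * (L₀ + W * L_K * t) * Real.exp (L_ρ * D * t) := by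
  have hρ'cont : Continuous (deriv ρ) := stmt6_cont_of_lip hρ'lip
  have hρ'0 : deriv ρ 0 = 0 := le_antisymm (hcoord_pos 0 le_rfl) (hcoord_neg 0 le_rfl)
  obtain ⟨x₀, hx₀⟩ := hΩne
  have hD0 : 0 ≤ D :=
    le_trans (setIntegral_nonneg hΩmeas (fun y _ => hKnonneg x₀ y)) (hD x₀ hx₀)
  have hM0 : 0 ≤ M := le_trans (abs_nonneg _) (hu₀bd x₀ hx₀)
  have hW0 : 0 ≤ W := by
    refine le_trans (abs_nonneg _) (hW 0 ?_)
    simp only [abs_zero]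
    positivity
  obtain ⟨Mu₀, hMu₀⟩ := hubd
  set Mu : ℝ := max Mu₀ 0 with hMudef
  have hMu : 0 ≤ Mu := le_max_right _ _
  have hubd' : ∀ x ∈ Ω, ∀ t ∈ Icc (0:ℝ) T, |u x t| ≤ Mu :=
    fun x hx t ht => (hMu₀ x hx t ht).trans (le_max_left _ _)
  obtain ⟨L₁, hL₁⟩ := hρ'lip (2 * Mu + 1) (by positivity)
  set L' : ℝ := max L₁ 0 with hL'def
  have hL' : 0 ≤ L' := le_max_right _ _
  have hσlip : ∀ a b : ℝ, |a| ≤ 2 * Mu → |b| ≤ 2 * Mu →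
      |deriv ρ a - deriv ρ b| ≤ L' * |a - b| := by
    intro a b ha hb
    refine (hL₁ a b (ha.trans (by linarith)) (hb.trans (by linarith))).trans ?_
    exact mul_le_mul_of_nonneg_right (le_max_left _ _) (abs_nonneg _)
  have hu00 : ∀ z ∈ Ω, u z 0 = u₀ z := by
    intro z hz
    have := hueq z hz 0 (left_mem_Icc.mpr hT.le)
    simpa using this
  have hueq' : ∀ z ∈ Ω, ∀ t ∈ Icc (0:ℝ) T,
      u z t = u z 0 + ∫ s in (0:ℝ)..t, ∫ y in Ω, K z y * deriv ρ (u z s - u y s) := by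
    intro z hz t ht
    rw [hu00 z hz]
    exact hueq z hz t ht
  -- upper bound u ≤ M
  have hup : ∀ z ∈ Ω, ∀ t ∈ Icc (0:ℝ) T, u z t ≤ M :=
    aux_max n Ω ⟨x₀, hx₀⟩ hΩmeas K hKnonneg hKint D hD (deriv ρ) hρ'cont hcoord_pos
      T hT u hucont Mu hMu hubd' L' hL' hσlip M hM0
      (fun z hz => (hu00 z hz) ▸ ((le_abs_self _).trans (hu₀bd z hz))) hueq'
  -- lower bound −M ≤ u, via the reflected system
  have hlow : ∀ z ∈ Ω, ∀ t ∈ Icc (0:ℝ) T, -M ≤ u z t := by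
    set σ' : ℝ → ℝ := fun w => -(deriv ρ (-w)) with hσ'def
    have hσ'c : Continuous σ' := (hρ'cont.comp continuous_neg).neg
    have hσ'nonpos : ∀ z : ℝ, 0 ≤ z → σ' z ≤ 0 := by
      intro z hz
      have := hcoord_neg (-z) (neg_nonpos.mpr hz)
      simp only [hσ'def]
      linarith
    have hσ'lip : ∀ a b : ℝ, |a| ≤ 2 * Mu → |b| ≤ 2 * Mu → |σ' a - σ' b| ≤ L' * |a - b| := by
      intro a b ha hb
      have h1 : |σ' a - σ' b| = |deriv ρ (-b) - deriv ρ (-a)| := by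
        simp only [hσ'def]
        rw [neg_sub_neg]
      rw [h1]
      have h2 := hσlip (-b) (-a) (by rwa [abs_neg]) (by rwa [abs_neg])
      have h3 : (-b) - (-a) = a - b := by ring
      rwa [h3] at h2
    have hueqneg : ∀ z ∈ Ω, ∀ t ∈ Icc (0:ℝ) T,
        (fun z t => -u z t) z t = (fun z t => -u z t) z 0 +
          ∫ s in (0:ℝ)..t, ∫ y in Ω,
            K z y * σ' ((fun z t => -u z t) z s - (fun z t => -u z t) y s) := by
      intro z hz t ht
      have h1 : ∀ s : ℝ, (∫ y in Ω, K z y * σ' (-u z s - -u y s)) =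
          -∫ y in Ω, K z y * deriv ρ (u z s - u y s) := by
        intro s
        rw [← integral_neg]
        congr 1
        funext y
        have harg : -(-u z s - -u y s) = u z s - u y s := by ring
        simp only [hσ'def]
        rw [show (-(-u z s - -u y s)) = u z s - u y s from harg]
        ring
      show -u z t = -u z 0 + ∫ s in (0:ℝ)..t, ∫ y in Ω, K z y * σ' (-u z s - -u y s)
      rw [intervalIntegral.integral_congr
          (g := fun s => -∫ y in Ω, K z y * deriv ρ (u z s - u y s)) (fun s _ => h1 s),
        intervalIntegral.integral_neg]
      have := hueq' z hz t ht
      linarith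
    have hneg := aux_max n Ω ⟨x₀, hx₀⟩ hΩmeas K hKnonneg hKint D hD σ' hσ'c hσ'nonpos
      T hT (fun z t => -u z t) hucont.neg Mu hMu
      (fun z hz t ht => by simpa using hubd' z hz t ht) L' hL' hσ'lip M hM0
      (fun z hz => by
        have h := (abs_le.mp (hu₀bd z hz)).1
        show -u z 0 ≤ M
        rw [hu00 z hz]
        linarith) hueqneg
    intro z hz t ht
    have h := hneg z hz t ht
    linarith
  have habsM : ∀ z ∈ Ω, ∀ t ∈ Icc (0:ℝ) T, |u z t| ≤ M :=
    fun z hz t ht => abs_le.mpr ⟨hlow z hz t ht, hup z hz t ht⟩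
  have hdiff2M : ∀ z ∈ Ω, ∀ y ∈ Ω, ∀ t ∈ Icc (0:ℝ) T, |u z t - u y t| ≤ 2 * M := by
    intro z hz y hy t ht
    have h1 := abs_le.mp (habsM z hz t ht)
    have h2 := abs_le.mp (habsM y hy t ht)
    rw [abs_le]
    constructor <;> linarith
  have hB'W : ∀ z ∈ Ω, ∀ y ∈ Ω, ∀ t ∈ Icc (0:ℝ) T, |deriv ρ (u z t - u y t)| ≤ W :=
    fun z hz y hy t ht => hW _ (hdiff2M z hz y hy t ht)
  have hderiv := core_deriv n Ω hΩmeas K hKnonneg hKint (deriv ρ) hρ'cont T hT u hucont W hB'W hueq'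
  have hint := core_int n Ω hΩmeas K hKnonneg hKint (deriv ρ) hρ'cont T u hucont W hB'W
  intro x hx x' hx' t ht
  by_cases hxx : x = x'
  · subst hxx
    simp [dist_self]
  · have hdist : 0 < dist x x' := dist_pos.mpr hxx
    have hL₀0 : 0 ≤ L₀ := by
      have h1 := (abs_nonneg (u₀ x - u₀ x')).trans (hu₀lip x hx x' hx')
      by_contra hcon
      push_neg at hcon
      nlinarith
    have hLK0 : 0 ≤ L_K := by
      have h0 : 0 ≤ ∫ y in Ω, |K x y - K x' y| :=
        setIntegral_nonneg hΩmeas (fun y _ => abs_nonneg _)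
      have h1 := hKlip x hx x' hx'
      by_contra hcon
      push_neg at hcon
      nlinarith
    rcases eq_or_lt_of_le hM0 with hMeq | hMpos
    · -- M = 0 : u vanishes identically
      have h1 := abs_le.mp (habsM x hx t ht)
      have h2 := abs_le.mp (habsM x' hx' t ht)
      have hLHS : |u x t - u x' t| ≤ 0 := by
        rw [abs_le]
        constructor <;> nlinarith
      have hadd : 0 ≤ L₀ + W * L_K * t :=
        add_nonneg hL₀0 (mul_nonneg (mul_nonneg hW0 hLK0) ht.1)
      have hRHS : 0 ≤ dist x x' * (L₀ + W * L_K * t) * Real.exp (L_ρ * D * t) :=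
        mul_nonneg (mul_nonneg dist_nonneg hadd) (Real.exp_pos _).le
      linarith
    · -- M > 0
      have hLρ0 : 0 ≤ L_ρ := by
        have h2M : (0:ℝ) ≤ 2 * M := by linarith
        have h0 : |(0:ℝ)| ≤ 2 * M := by simpa using h2M
        have hq := hLρ (2 * M) 0 (by rw [abs_of_nonneg h2M]) h0
        rw [sub_zero, abs_of_nonneg h2M] at hq
        nlinarith [abs_nonneg (deriv ρ (2 * M) - deriv ρ 0)]
      have hIcc_mem : ∀ τ ∈ Ico (0:ℝ) T, Icc (0:ℝ) T ∈ nhdsWithin τ (Ici τ) := by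
        intro τ hτ
        refine mem_nhdsWithin.mpr ⟨Iio T, isOpen_Iio, hτ.2, ?_⟩
        rintro s ⟨hs1, hs2⟩
        exact ⟨hτ.1.trans hs2, hs1.le⟩
      have hu_tc : ∀ z ∈ Ω, ContinuousOn (fun s => u z s) (Icc 0 T) := by
        intro z hz
        exact hucont.comp (continuous_const.prodMk continuous_id).continuousOn
          (fun s hs => ⟨hz, hs⟩)
      have hu_xc : ∀ τ ∈ Icc (0:ℝ) T, ContinuousOn (fun y => u y τ) Ω := by
        intro τ hτ
        exact hucont.comp (continuous_id.prodMk continuous_const).continuousOn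
          (fun y hy => ⟨hy, hτ⟩)
      have hintB : ∀ τ ∈ Icc (0:ℝ) T,
          IntegrableOn (fun y => K x' y * deriv ρ (u x τ - u y τ)) Ω := by
        intro τ hτ
        have hmeasB : AEStronglyMeasurable (fun y => K x' y * deriv ρ (u x τ - u y τ))
            (volume.restrict Ω) :=
          (hKint x' hx').aestronglyMeasurable.mul
            ((hρ'cont.comp_continuousOn
              (continuousOn_const.sub (hu_xc τ hτ))).aestronglyMeasurable hΩmeas)
        refine Integrable.mono' ((hKint x' hx').mul_const W) hmeasB ?_
        filter_upwards [ae_restrict_mem hΩmeas] with y hy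
        rw [Real.norm_eq_abs, abs_mul, abs_of_nonneg (hKnonneg x' y)]
        exact mul_le_mul_of_nonneg_left (hB'W x hx y hy τ hτ) (hKnonneg x' y)
      have hbound : ∀ τ ∈ Ico (0:ℝ) T,
          ‖(∫ y in Ω, K x y * deriv ρ (u x τ - u y τ)) -
            (∫ y in Ω, K x' y * deriv ρ (u x' τ - u y τ))‖
            ≤ (L_ρ * D) * ‖u x τ - u x' τ‖ + W * L_K * dist x x' := by
        intro τ hτ'
        have hτ := Ico_subset_Icc_self hτ'
        set I1 : ℝ := ∫ y in Ω, (K x y - K x' y) * deriv ρ (u x τ - u y τ) with hI1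
        set I2 : ℝ := ∫ y in Ω, K x' y * (deriv ρ (u x τ - u y τ) - deriv ρ (u x' τ - u y τ))
          with hI2
        have hintA := hint x hx τ hτ
        have hintC := hint x' hx' τ hτ
        have hintB' := hintB τ hτ
        have hintAB : IntegrableOn (fun y => (K x y - K x' y) * deriv ρ (u x τ - u y τ)) Ω := by
          have he : (fun y => (K x y - K x' y) * deriv ρ (u x τ - u y τ)) =
              fun y => K x y * deriv ρ (u x τ - u y τ) - K x' y * deriv ρ (u x τ - u y τ) := by
            funext y; ring
          rw [he]; exact hintA.sub hintB'
        have hintBC : IntegrableOn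
            (fun y => K x' y * (deriv ρ (u x τ - u y τ) - deriv ρ (u x' τ - u y τ))) Ω := by
          have he : (fun y => K x' y * (deriv ρ (u x τ - u y τ) - deriv ρ (u x' τ - u y τ))) =
              fun y => K x' y * deriv ρ (u x τ - u y τ) - K x' y * deriv ρ (u x' τ - u y τ) := by
            funext y; ring
          rw [he]; exact hintB'.sub hintC
        have hsplit : (∫ y in Ω, K x y * deriv ρ (u x τ - u y τ)) -
            (∫ y in Ω, K x' y * deriv ρ (u x' τ - u y τ)) = I1 + I2 := by
          have e1 : I1 = (∫ y in Ω, K x y * deriv ρ (u x τ - u y τ)) -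
              ∫ y in Ω, K x' y * deriv ρ (u x τ - u y τ) := by
            rw [hI1, ← integral_sub hintA hintB']
            congr 1; funext y; ring
          have e2 : I2 = (∫ y in Ω, K x' y * deriv ρ (u x τ - u y τ)) -
              ∫ y in Ω, K x' y * deriv ρ (u x' τ - u y τ) := by
            rw [hI2, ← integral_sub hintB' hintC]
            congr 1; funext y; ring
          rw [e1, e2]; ring
        have hI1bd : |I1| ≤ W * (L_K * dist x x') := by
          have h1 : |I1| ≤ ∫ y in Ω, |(K x y - K x' y) * deriv ρ (u x τ - u y τ)| := by
            simpa only [Real.norm_eq_abs] using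
              norm_integral_le_integral_norm (μ := volume.restrict Ω)
                (f := fun y => (K x y - K x' y) * deriv ρ (u x τ - u y τ))
          have h2 : (∫ y in Ω, |(K x y - K x' y) * deriv ρ (u x τ - u y τ)|) ≤
              ∫ y in Ω, |K x y - K x' y| * W := by
            refine setIntegral_mono_on hintAB.abs
              (((hKint x hx).sub (hKint x' hx')).abs.mul_const W) hΩmeas ?_
            intro y hy
            rw [abs_mul]
            exact mul_le_mul_of_nonneg_left (hB'W x hx y hy τ hτ) (abs_nonneg _)
          have h3 : (∫ y in Ω, |K x y - K x' y| * W) = (∫ y in Ω, |K x y - K x' y|) * W :=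
            integral_mul_const _ _
          have h4 : (∫ y in Ω, |K x y - K x' y|) * W ≤ (L_K * dist x x') * W :=
            mul_le_mul_of_nonneg_right (hKlip x hx x' hx') hW0
          have h5 : (L_K * dist x x') * W = W * (L_K * dist x x') := mul_comm _ _
          linarith
        have hI2bd : |I2| ≤ D * (L_ρ * |u x τ - u x' τ|) := by
          have h1 : |I2| ≤
              ∫ y in Ω, |K x' y * (deriv ρ (u x τ - u y τ) - deriv ρ (u x' τ - u y τ))| := by
            simpa only [Real.norm_eq_abs] using
              norm_integral_le_integral_norm (μ := volume.restrict Ω)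
                (f := fun y => K x' y * (deriv ρ (u x τ - u y τ) - deriv ρ (u x' τ - u y τ)))
          have h2 : (∫ y in Ω, |K x' y * (deriv ρ (u x τ - u y τ) - deriv ρ (u x' τ - u y τ))|)
              ≤ ∫ y in Ω, K x' y * (L_ρ * |u x τ - u x' τ|) := by
            refine setIntegral_mono_on hintBC.abs ((hKint x' hx').mul_const _) hΩmeas ?_
            intro y hy
            rw [abs_mul, abs_of_nonneg (hKnonneg x' y)]
            refine mul_le_mul_of_nonneg_left ?_ (hKnonneg x' y)
            have hargs := hLρ (u x τ - u y τ) (u x' τ - u y τ)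
              (hdiff2M x hx y hy τ hτ) (hdiff2M x' hx' y hy τ hτ)
            have he : (u x τ - u y τ) - (u x' τ - u y τ) = u x τ - u x' τ := by ring
            rwa [he] at hargs
          have h3 : (∫ y in Ω, K x' y * (L_ρ * |u x τ - u x' τ|)) =
              (∫ y in Ω, K x' y) * (L_ρ * |u x τ - u x' τ|) := integral_mul_const _ _
          have h4 : (∫ y in Ω, K x' y) * (L_ρ * |u x τ - u x' τ|) ≤
              D * (L_ρ * |u x τ - u x' τ|) :=
            mul_le_mul_of_nonneg_right (hD x' hx') (mul_nonneg hLρ0 (abs_nonneg _))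
          linarith
        rw [Real.norm_eq_abs, Real.norm_eq_abs, hsplit]
        have habs12 := abs_add_le I1 I2
        have he1 : D * (L_ρ * |u x τ - u x' τ|) = (L_ρ * D) * |u x τ - u x' τ| := by ring
        have he2 : W * (L_K * dist x x') = W * L_K * dist x x' := by ring
        linarith
      have hainit : ‖u x 0 - u x' 0‖ ≤ L₀ * dist x x' := by
        rw [Real.norm_eq_abs, hu00 x hx, hu00 x' hx']
        exact hu₀lip x hx x' hx'
      have hgron := norm_le_gronwallBound_of_norm_deriv_right_le
        (f := fun τ => u x τ - u x' τ)
        (f' := fun τ => (∫ y in Ω, K x y * deriv ρ (u x τ - u y τ)) -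
          (∫ y in Ω, K x' y * deriv ρ (u x' τ - u y τ)))
        (δ := L₀ * dist x x') (K := L_ρ * D) (ε := W * L_K * dist x x') (a := 0) (b := T)
        ((hu_tc x hx).sub (hu_tc x' hx'))
        (fun τ hτ => (((hderiv x hx τ (Ico_subset_Icc_self hτ)).sub
          (hderiv x' hx' τ (Ico_subset_Icc_self hτ))).mono_of_mem_nhdsWithin (hIcc_mem τ hτ)))
        hainit
        hbound
      have h1 := hgron t ht
      rw [sub_zero, Real.norm_eq_abs] at h1
      have hd0 : (0:ℝ) ≤ dist x x' := dist_nonneg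
      have h2 := stmt6_gronwallBound_le (mul_nonneg hL₀0 hd0)
        (mul_nonneg hLρ0 hD0) (mul_nonneg (mul_nonneg hW0 hLK0) hd0) ht.1
      have h3 : (L₀ * dist x x' + W * L_K * dist x x' * t) * Real.exp (L_ρ * D * t) =
          dist x x' * (L₀ + W * L_K * t) * Real.exp (L_ρ * D * t) := by ring
      linarith
end

section
/- Let Ω ⊆ ℝⁿ be a nonempty measurable set, K an admissible kernel which in addition satisfies ‖K(x,·) − K(x',·)‖_{L¹(Ω)} ≤ L_K |x − x'| for all x, x' ∈ Ω, and let ρ be a recognition function satisfying the coordination condition. Let u₀ : Ω → ℝ be bounded and Lipschitz with constant L₀, let T < ∞, and let u be a solution of the initial value problem u_t = g[u] with initial datum u₀ on Ω × [0,T]. Then u is (jointly) Lipschitz continuous on Ω × [0,T]: there exists L, depending only on T, K, ρ and u₀, such that |u(x,t) − u(y,s)| ≤ L (|x − y| + |t − s|) for all x, y ∈ Ω and s, t ∈ [0,T]. -/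
/-! Bound `ρ'` by `C` and give it a Lipschitz constant `Lρ` on the range of the oscillations
`u x t - u y t`. Then `|u_t| ≤ C D`, which is the Lipschitz bound in time. In space, the
difference `u x - u x'` has right derivative bounded by
`Lρ D |u x - u x'| + C ‖K(x,·) - K(x',·)‖₁`, so Gronwall's inequality bounds it by
`(|u₀ x - u₀ x'| + C T ‖K(x,·) - K(x',·)‖₁) e^{Lρ D T}`, which is linear in `|x - x'|`. -/

open MeasureTheory Set
open Filter Topology

section IntegralEquation

variable {f g : ℝ → ℝ} {c T : ℝ}

theorem hasDerivWithinAt_Ici_of_eq_add_integral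
    (hf : ∀ t ∈ Icc 0 T, f t = c + ∫ s in (0:ℝ)..t, g s) (hg : ContinuousOn g (Icc 0 T))
    {t : ℝ} (ht : t ∈ Ico 0 T) : HasDerivWithinAt f (g t) (Ici t) t := by
  have htT : t ∈ Icc 0 T := Ico_subset_Icc_self ht
  have hnhds : Icc 0 T ∈ 𝓝[Ici t] t :=
    mem_nhdsWithin.2 ⟨Iio T, isOpen_Iio, ht.2, fun τ hτ => ⟨ht.1.trans hτ.2, hτ.1.le⟩⟩
  have hFTC := intervalIntegral.integral_hasDerivWithinAt_right (s := Ici t) (t := Ioi t)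
    (hg.mono (uIcc_subset_Icc ⟨le_rfl, ht.1.trans htT.2⟩ htT)).intervalIntegrable
    ⟨Icc 0 T, nhdsWithin_mono t Ioi_subset_Ici_self hnhds,
      hg.aestronglyMeasurable measurableSet_Icc⟩
    (((hg t htT).mono_of_mem_nhdsWithin hnhds).mono Ioi_subset_Ici_self)
  exact (hFTC.const_add c).congr_of_eventuallyEq (eventually_of_mem hnhds hf) (hf t htT)

theorem abs_sub_le_of_eq_add_integral
    (hf : ∀ t ∈ Icc 0 T, f t = c + ∫ s in (0:ℝ)..t, g s) (hg : ContinuousOn g (Icc 0 T))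
    {B : ℝ} (hB : ∀ s ∈ Icc 0 T, |g s| ≤ B) {t s : ℝ} (ht : t ∈ Icc 0 T) (hs : s ∈ Icc 0 T) :
    |f t - f s| ≤ B * |t - s| := by
  have hint : ∀ r ∈ Icc 0 T, IntervalIntegrable g volume 0 r := fun r hr =>
    (hg.mono (uIcc_subset_Icc ⟨le_rfl, ht.1.trans ht.2⟩ hr)).intervalIntegrable
  have hdiff : f t - f s = ∫ σ in s..t, g σ := by
    rw [hf t ht, hf s hs, ← intervalIntegral.integral_interval_sub_left (hint t ht) (hint s hs)]
    ring
  rw [hdiff, ← Real.norm_eq_abs]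
  exact intervalIntegral.norm_integral_le_of_norm_le_const fun σ hσ =>
    hB σ (uIcc_subset_Icc hs ht (uIoc_subset_uIcc hσ))

end IntegralEquation

theorem Real.exp_sub_one_le_mul_exp {a : ℝ} : Real.exp a - 1 ≤ a * Real.exp a := by
  have h := mul_le_mul_of_nonneg_right (Real.one_sub_le_exp_neg a) (Real.exp_pos a).le
  rw [← Real.exp_add, neg_add_cancel, Real.exp_zero] at h
  linarith

theorem gronwallBound_le_mul_exp {δ K ε x : ℝ} (hK : 0 ≤ K) (hε : 0 ≤ ε) :
    gronwallBound δ K ε x ≤ (δ + ε * x) * Real.exp (K * x) := by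
  rcases hK.eq_or_lt with rfl | hK
  · simp [gronwallBound_K0]
  · calc gronwallBound δ K ε x
        = δ * Real.exp (K * x) + ε / K * (Real.exp (K * x) - 1) := by
          rw [gronwallBound_of_K_ne_0 hK.ne']
      _ ≤ δ * Real.exp (K * x) + ε / K * (K * x * Real.exp (K * x)) := by
          gcongr
          exact Real.exp_sub_one_le_mul_exp
      _ = (δ + ε * x) * Real.exp (K * x) := by field_simp

theorem abs_le_mul_exp_of_abs_deriv_right_le {f f' : ℝ → ℝ} {δ K ε T : ℝ}
    (hf : ContinuousOn f (Icc 0 T)) (hf' : ∀ t ∈ Ico 0 T, HasDerivWithinAt f (f' t) (Ici t) t)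
    (h0 : |f 0| ≤ δ) (hbound : ∀ t ∈ Ico 0 T, |f' t| ≤ K * |f t| + ε) (hK : 0 ≤ K)
    (hε : 0 ≤ ε) {t : ℝ} (ht : t ∈ Icc 0 T) : |f t| ≤ (δ + ε * T) * Real.exp (K * T) := by
  have hδ : 0 ≤ δ := (abs_nonneg _).trans h0
  have hgr := norm_le_gronwallBound_of_norm_deriv_right_le hf hf' h0 hbound t ht
  rw [sub_zero] at hgr
  calc |f t| ≤ (δ + ε * t) * Real.exp (K * t) := hgr.trans (gronwallBound_le_mul_exp hK hε)
    _ ≤ (δ + ε * T) * Real.exp (K * T) := by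
      obtain ⟨ht0, htT⟩ := ht
      have := ht0.trans htT
      gcongr

section ProductContinuity

variable {X : Type*} [TopologicalSpace X] {Ω : Set X} {u : X → ℝ → ℝ} {T : ℝ} {x x' : X} {t : ℝ}

theorem continuousOn_sub_apply_time (hu : ContinuousOn (fun p : X × ℝ => u p.1 p.2) (Ω ×ˢ Icc 0 T))
    (hx : x ∈ Ω) (hx' : x' ∈ Ω) : ContinuousOn (fun t => u x t - u x' t) (Icc 0 T) :=
  (hu.comp (continuous_const.prodMk continuous_id).continuousOn fun _ ht => ⟨hx, ht⟩).sub
    (hu.comp (continuous_const.prodMk continuous_id).continuousOn fun _ ht => ⟨hx', ht⟩)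

theorem continuousOn_sub_apply_space (hu : ContinuousOn (fun p : X × ℝ => u p.1 p.2) (Ω ×ˢ Icc 0 T))
    (ht : t ∈ Icc 0 T) : ContinuousOn (fun y => u x t - u y t) Ω :=
  continuousOn_const.sub
    (hu.comp (continuous_id.prodMk continuous_const).continuousOn fun _ hy => ⟨hy, ht⟩)

end ProductContinuity

section Nonlocality

variable {X : Type*} [MeasurableSpace X] {μ : Measure X} {Ω : Set X} {K : X → X → ℝ}
  {φ : ℝ → ℝ} {u : X → ℝ → ℝ} {u₀ : X → ℝ} {S : Set ℝ} {T C D : ℝ} {x x' : X} {t : ℝ}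

noncomputable def nonlocality (μ : Measure X) (Ω : Set X) (K : X → X → ℝ) (φ : ℝ → ℝ)
    (u : X → ℝ → ℝ) (x : X) (t : ℝ) : ℝ :=
  ∫ y in Ω, K x y * φ (u x t - u y t) ∂μ

def IsNonlocalSolution (μ : Measure X) (Ω : Set X) (K : X → X → ℝ) (φ : ℝ → ℝ) (u₀ : X → ℝ) (T : ℝ)
    (u : X → ℝ → ℝ) : Prop :=
  ∀ x ∈ Ω, ∀ t ∈ Icc 0 T, u x t = u₀ x + ∫ s in (0:ℝ)..t, nonlocality μ Ω K φ u x s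

structure IsBoundedKernel (μ : Measure X) (Ω : Set X) (K : X → X → ℝ) (D : ℝ) : Prop where
  nonneg : ∀ x y, 0 ≤ K x y
  integrableOn : ∀ x ∈ Ω, IntegrableOn (K x) Ω μ
  integral_le : ∀ x ∈ Ω, ∫ y in Ω, K x y ∂μ ≤ D

theorem abs_nonlocality_le (hΩ : MeasurableSet Ω) (hK : IsBoundedKernel μ Ω K D)
    (hS : ∀ x ∈ Ω, ∀ y ∈ Ω, ∀ t ∈ Icc 0 T, u x t - u y t ∈ S)
    (hC0 : 0 ≤ C) (hC : ∀ z ∈ S, |φ z| ≤ C) (hx : x ∈ Ω) (ht : t ∈ Icc 0 T) :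
    |nonlocality μ Ω K φ u x t| ≤ C * D :=
  calc |nonlocality μ Ω K φ u x t| ≤ ∫ y in Ω, C * K x y ∂μ := by
        rw [nonlocality, ← Real.norm_eq_abs]
        refine norm_integral_le_of_norm_le ((hK.integrableOn x hx).const_mul C)
          (ae_restrict_of_forall_mem hΩ fun y hy => ?_)
        rw [norm_mul, Real.norm_of_nonneg (hK.nonneg x y), mul_comm]
        exact mul_le_mul_of_nonneg_right (hC _ (hS x hx y hy t ht)) (hK.nonneg x y)
    _ = C * ∫ y in Ω, K x y ∂μ := integral_const_mul _ _
    _ ≤ C * D := mul_le_mul_of_nonneg_left (hK.integral_le x hx) hC0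

variable [TopologicalSpace X] [OpensMeasurableSpace X]

theorem integrableOn_kernel_mul_comp_sub (hΩ : MeasurableSet Ω)
    (hKi : ∀ x ∈ Ω, IntegrableOn (K x) Ω μ)
    (hu : ContinuousOn (fun p : X × ℝ => u p.1 p.2) (Ω ×ˢ Icc 0 T))
    (hS : ∀ x ∈ Ω, ∀ y ∈ Ω, ∀ t ∈ Icc 0 T, u x t - u y t ∈ S) (hφ : ContinuousOn φ S)
    (hC : ∀ z ∈ S, |φ z| ≤ C) (hx : x ∈ Ω) (hx' : x' ∈ Ω) (ht : t ∈ Icc 0 T) :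
    IntegrableOn (fun y => K x' y * φ (u x t - u y t)) Ω μ :=
  (hKi x' hx').mul_bdd
    ((hφ.comp (continuousOn_sub_apply_space hu ht) fun y hy =>
      hS x hx y hy t ht).aestronglyMeasurable hΩ)
    (ae_restrict_of_forall_mem hΩ fun y hy => hC _ (hS x hx y hy t ht))

theorem continuousOn_nonlocality (hΩ : MeasurableSet Ω)
    (hKi : ∀ x ∈ Ω, IntegrableOn (K x) Ω μ)
    (hu : ContinuousOn (fun p : X × ℝ => u p.1 p.2) (Ω ×ˢ Icc 0 T))
    (hS : ∀ x ∈ Ω, ∀ y ∈ Ω, ∀ t ∈ Icc 0 T, u x t - u y t ∈ S) (hφ : ContinuousOn φ S)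
    (hC : ∀ z ∈ S, |φ z| ≤ C) (hx : x ∈ Ω) :
    ContinuousOn (nonlocality μ Ω K φ u x) (Icc 0 T) := by
  refine continuousOn_of_dominated (bound := fun y => C * |K x y|)
    (fun t ht =>
      (integrableOn_kernel_mul_comp_sub hΩ hKi hu hS hφ hC hx hx ht).aestronglyMeasurable)
    (fun t ht => ae_restrict_of_forall_mem hΩ fun y hy => ?_) ((hKi x hx).abs.const_mul C)
    (ae_restrict_of_forall_mem hΩ fun y hy => continuousOn_const.mul
      (hφ.comp (continuousOn_sub_apply_time hu hx hy) fun t ht => hS x hx y hy t ht))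
  rw [norm_mul, Real.norm_eq_abs, mul_comm]
  exact mul_le_mul_of_nonneg_right (hC _ (hS x hx y hy t ht)) (abs_nonneg _)

theorem abs_nonlocality_sub_le (hΩ : MeasurableSet Ω) (hK : IsBoundedKernel μ Ω K D)
    (hu : ContinuousOn (fun p : X × ℝ => u p.1 p.2) (Ω ×ˢ Icc 0 T))
    (hS : ∀ x ∈ Ω, ∀ y ∈ Ω, ∀ t ∈ Icc 0 T, u x t - u y t ∈ S) {Lφ : NNReal}
    (hφ : LipschitzOnWith Lφ φ S) (hC : ∀ z ∈ S, |φ z| ≤ C) (hx : x ∈ Ω) (hx' : x' ∈ Ω)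
    (ht : t ∈ Icc 0 T) :
    |nonlocality μ Ω K φ u x t - nonlocality μ Ω K φ u x' t|
      ≤ Lφ * D * |u x t - u x' t| + C * ∫ y in Ω, |K x y - K x' y| ∂μ := by
  obtain ⟨hK0, hKi, hD⟩ := hK
  have hint := fun {x x'} hx hx' =>
    integrableOn_kernel_mul_comp_sub (x := x) (x' := x') hΩ hKi hu hS hφ.continuousOn hC hx hx' ht
  have hpointwise : ∀ y ∈ Ω, ‖K x y * φ (u x t - u y t) - K x' y * φ (u x' t - u y t)‖
      ≤ C * |K x y - K x' y| + Lφ * |u x t - u x' t| * K x' y := fun y hy => by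
    have hφ_diff : |φ (u x t - u y t) - φ (u x' t - u y t)| ≤ Lφ * |u x t - u x' t| := by
      simpa [Real.dist_eq] using
        hφ.dist_le_mul _ (hS x hx y hy t ht) _ (hS x' hx' y hy t ht)
    calc ‖K x y * φ (u x t - u y t) - K x' y * φ (u x' t - u y t)‖
        = |(K x y - K x' y) * φ (u x t - u y t)
            + K x' y * (φ (u x t - u y t) - φ (u x' t - u y t))| := by
          rw [Real.norm_eq_abs]; ring_nf
      _ ≤ |K x y - K x' y| * C + K x' y * (Lφ * |u x t - u x' t|) := by
          refine (abs_add_le _ _).trans ?_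
          rw [abs_mul, abs_mul, abs_of_nonneg (hK0 x' y)]
          exact add_le_add (mul_le_mul_of_nonneg_left (hC _ (hS x hx y hy t ht)) (abs_nonneg _))
            (mul_le_mul_of_nonneg_left hφ_diff (hK0 x' y))
      _ = C * |K x y - K x' y| + Lφ * |u x t - u x' t| * K x' y := by ring
  have hbound₁ : IntegrableOn (fun y => C * |K x y - K x' y|) Ω μ :=
    ((hKi x hx).sub (hKi x' hx')).abs.const_mul C
  have hbound₂ : IntegrableOn (fun y => Lφ * |u x t - u x' t| * K x' y) Ω μ :=
    (hKi x' hx').const_mul _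
  calc |nonlocality μ Ω K φ u x t - nonlocality μ Ω K φ u x' t|
      = ‖∫ y in Ω, (K x y * φ (u x t - u y t) - K x' y * φ (u x' t - u y t)) ∂μ‖ := by
        rw [nonlocality, nonlocality, integral_sub (hint hx hx) (hint hx' hx'), Real.norm_eq_abs]
    _ ≤ ∫ y in Ω, (C * |K x y - K x' y| + Lφ * |u x t - u x' t| * K x' y) ∂μ :=
        norm_integral_le_of_norm_le (hbound₁.add hbound₂) (ae_restrict_of_forall_mem hΩ hpointwise)
    _ = C * (∫ y in Ω, |K x y - K x' y| ∂μ) + Lφ * |u x t - u x' t| * ∫ y in Ω, K x' y ∂μ := by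
        rw [integral_add hbound₁ hbound₂, integral_const_mul, integral_const_mul]
    _ ≤ Lφ * D * |u x t - u x' t| + C * ∫ y in Ω, |K x y - K x' y| ∂μ := by
        have := mul_le_mul_of_nonneg_left (hD x' hx') (by positivity : 0 ≤ Lφ * |u x t - u x' t|)
        linarith

theorem IsNonlocalSolution.abs_sub_time_le (hsol : IsNonlocalSolution μ Ω K φ u₀ T u)
    (hΩ : MeasurableSet Ω) (hK : IsBoundedKernel μ Ω K D)
    (hu : ContinuousOn (fun p : X × ℝ => u p.1 p.2) (Ω ×ˢ Icc 0 T))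
    (hS : ∀ x ∈ Ω, ∀ y ∈ Ω, ∀ t ∈ Icc 0 T, u x t - u y t ∈ S) (hφ : ContinuousOn φ S)
    (hC0 : 0 ≤ C) (hC : ∀ z ∈ S, |φ z| ≤ C) (hx : x ∈ Ω) {s : ℝ} (ht : t ∈ Icc 0 T)
    (hs : s ∈ Icc 0 T) : |u x t - u x s| ≤ C * D * |t - s| :=
  abs_sub_le_of_eq_add_integral (hsol x hx)
    (continuousOn_nonlocality hΩ hK.integrableOn hu hS hφ hC hx)
    (fun _ hσ => abs_nonlocality_le hΩ hK hS hC0 hC hx hσ) ht hs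

theorem IsNonlocalSolution.abs_sub_space_le (hsol : IsNonlocalSolution μ Ω K φ u₀ T u)
    (hΩ : MeasurableSet Ω) (hK : IsBoundedKernel μ Ω K D)
    (hu : ContinuousOn (fun p : X × ℝ => u p.1 p.2) (Ω ×ˢ Icc 0 T))
    (hS : ∀ x ∈ Ω, ∀ y ∈ Ω, ∀ t ∈ Icc 0 T, u x t - u y t ∈ S) {Lφ : NNReal}
    (hφ : LipschitzOnWith Lφ φ S) (hC0 : 0 ≤ C) (hC : ∀ z ∈ S, |φ z| ≤ C) (hx : x ∈ Ω)
    (hx' : x' ∈ Ω) (ht : t ∈ Icc 0 T) :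
    |u x t - u x' t| ≤ (|u₀ x - u₀ x'| + C * (∫ y in Ω, |K x y - K x' y| ∂μ) * T)
      * Real.exp (Lφ * D * T) := by
  have h0 : (0 : ℝ) ∈ Icc 0 T := ⟨le_rfl, ht.1.trans ht.2⟩
  have hD0 : 0 ≤ D := (integral_nonneg (hK.nonneg x)).trans (hK.integral_le x hx)
  have hderiv := fun {x} (hx : x ∈ Ω) {τ} (hτ : τ ∈ Ico 0 T) =>
    hasDerivWithinAt_Ici_of_eq_add_integral (hsol x hx)
      (continuousOn_nonlocality hΩ hK.integrableOn hu hS hφ.continuousOn hC hx) hτ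
  refine abs_le_mul_exp_of_abs_deriv_right_le (continuousOn_sub_apply_time hu hx hx')
    (fun τ hτ => (hderiv hx hτ).sub (hderiv hx' hτ)) ?_
    (fun τ hτ => abs_nonlocality_sub_le hΩ hK hu hS hφ hC hx hx'
      (Ico_subset_Icc_self hτ)) (by positivity)
    (mul_nonneg hC0 (integral_nonneg fun _ => abs_nonneg _)) ht
  rw [hsol x hx 0 h0, hsol x' hx' 0 h0]
  simp

end Nonlocality

theorem lipschitzOnWith_Icc_of_abs_sub_le {φ : ℝ → ℝ} {R L : ℝ}
    (h : ∀ a b : ℝ, |a| ≤ R → |b| ≤ R → |φ a - φ b| ≤ L * |a - b|) :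
    LipschitzOnWith (Real.toNNReal L) φ (Icc (-R) R) :=
  LipschitzOnWith.of_dist_le_mul fun a ha b hb => by
    rw [Real.dist_eq, Real.dist_eq]
    exact (h a b (abs_le.2 ha) (abs_le.2 hb)).trans
      (mul_le_mul_of_nonneg_right (Real.le_coe_toNNReal L) (abs_nonneg _))

theorem abs_sub_le_max_mul_dist_add_abs_sub {X : Type*} [PseudoMetricSpace X] {v : X → ℝ → ℝ}
    {A B : ℝ} {x y : X} {t s : ℝ} (htime : |v x t - v x s| ≤ A * |t - s|)
    (hspace : |v x s - v y s| ≤ B * dist x y) :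
    |v x t - v y s| ≤ max A B * (dist x y + |t - s|) :=
  calc |v x t - v y s| ≤ |v x t - v x s| + |v x s - v y s| := abs_sub_le _ _ _
    _ ≤ max A B * |t - s| + max A B * dist x y :=
        add_le_add (htime.trans (mul_le_mul_of_nonneg_right (le_max_left _ _) (abs_nonneg _)))
          (hspace.trans (mul_le_mul_of_nonneg_right (le_max_right _ _) dist_nonneg))
    _ = max A B * (dist x y + |t - s|) := by ring

theorem statement7_general
    (n : ℕ) (Ω : Set (EuclideanSpace ℝ (Fin n)))
    (hΩmeas : MeasurableSet Ω)
    -- `K` is an admissible kernel, Lipschitz in the first variable in the `L¹` sense: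
    (K : EuclideanSpace ℝ (Fin n) → EuclideanSpace ℝ (Fin n) → ℝ)
    (hKnonneg : ∀ x y, 0 ≤ K x y)
    (hKint : ∀ x ∈ Ω, IntegrableOn (K x) Ω)
    (D : ℝ) (hD : ∀ x ∈ Ω, (∫ y in Ω, K x y) ≤ D)
    (L_K : ℝ) (hKlip : ∀ x ∈ Ω, ∀ x' ∈ Ω, (∫ y in Ω, |K x y - K x' y|) ≤ L_K * dist x x')
    -- `ρ` is a recognition function satisfying the coordination condition:
    (ρ : ℝ → ℝ)
    (hρ'lip : ∀ R : ℝ, 0 < R → ∃ L : ℝ, ∀ a b : ℝ, |a| ≤ R → |b| ≤ R →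
        |deriv ρ a - deriv ρ b| ≤ L * |a - b|)
    -- `u₀` bounded and Lipschitz with constant `L₀`:
    (u₀ : EuclideanSpace ℝ (Fin n) → ℝ)
    (L₀ : ℝ) (hu₀lip : ∀ x ∈ Ω, ∀ x' ∈ Ω, |u₀ x - u₀ x'| ≤ L₀ * dist x x')
    -- `u` solves the IVP on `Ω × [0,T]` with `T < ∞`:
    (T : ℝ)
    (u : EuclideanSpace ℝ (Fin n) → ℝ → ℝ)
    (hucont : ContinuousOn (fun p : EuclideanSpace ℝ (Fin n) × ℝ => u p.1 p.2) (Ω ×ˢ Icc 0 T))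
    (hubd : ∃ Mu : ℝ, ∀ x ∈ Ω, ∀ t ∈ Icc (0:ℝ) T, |u x t| ≤ Mu)
    (hueq : ∀ x ∈ Ω, ∀ t ∈ Icc (0:ℝ) T,
        u x t = u₀ x + ∫ s in (0:ℝ)..t, ∫ y in Ω, K x y * deriv ρ (u x s - u y s)) :
    ∃ L : ℝ, ∀ x ∈ Ω, ∀ y ∈ Ω, ∀ t ∈ Icc (0:ℝ) T, ∀ s ∈ Icc (0:ℝ) T,
      |u x t - u y s| ≤ L * (dist x y + |t - s|) := by
  obtain ⟨Mu, hMu⟩ := hubd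
  set R := 2 * |Mu| + 1
  have hS : ∀ x ∈ Ω, ∀ y ∈ Ω, ∀ t ∈ Icc 0 T, u x t - u y t ∈ Icc (-R) R := fun x hx y hy t ht =>
    abs_le.1 ((abs_sub _ _).trans (by linarith [hMu x hx t ht, hMu y hy t ht, le_abs_self Mu]))
  obtain ⟨Lρ, hLρ⟩ := hρ'lip R (by positivity)
  have hφ := lipschitzOnWith_Icc_of_abs_sub_le hLρ
  obtain ⟨C, hC0, hC⟩ :=
    (isCompact_Icc.image_of_continuousOn hφ.continuousOn).isBounded.exists_pos_norm_le
  replace hC : ∀ z ∈ Icc (-R) R, |deriv ρ z| ≤ C := fun z hz => hC _ (mem_image_of_mem _ hz)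
  have hK : IsBoundedKernel volume Ω K D := ⟨hKnonneg, hKint, hD⟩
  have hsol : IsNonlocalSolution volume Ω K (deriv ρ) u₀ T u := hueq
  set E := Real.exp (Real.toNNReal Lρ * D * T)
  refine ⟨max (C * D) ((L₀ + C * L_K * T) * E), fun x hx y hy t ht s hs =>
    abs_sub_le_max_mul_dist_add_abs_sub
      (hsol.abs_sub_time_le hΩmeas hK hucont hS hφ.continuousOn hC0.le hC hx ht hs) ?_⟩
  have hT : 0 ≤ T := hs.1.trans hs.2
  calc |u x s - u y s|
      ≤ (|u₀ x - u₀ y| + C * (∫ z in Ω, |K x z - K y z|) * T) * E :=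
        hsol.abs_sub_space_le hΩmeas hK hucont hS hφ hC0.le hC hx hy hs
    _ ≤ (L₀ * dist x y + C * (L_K * dist x y) * T) * E := by
        gcongr
        exacts [hu₀lip x hx y hy, hKlip x hx y hy]
    _ = (L₀ + C * L_K * T) * E * dist x y := by ring

/-- Joint space-time Lipschitz regularity for the coordination game.  Under the
hypotheses of the spatial regularity theorem (Lipschitz kernel in the `L¹` sense, coordination
condition, bounded Lipschitz initial datum), a solution `u` of the IVP on `Ω × [0,T]` with
`T < ∞` is jointly Lipschitz: there is `L` with
`|u(x,t) − u(y,s)| ≤ L (|x − y| + |t − s|)` for all `x, y ∈ Ω`, `s, t ∈ [0,T]`. -/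
theorem statement7
    (n : ℕ) (Ω : Set (EuclideanSpace ℝ (Fin n)))
    (hΩne : Ω.Nonempty) (hΩmeas : MeasurableSet Ω)
    -- `K` is an admissible kernel, Lipschitz in the first variable in the `L¹` sense:
    (K : EuclideanSpace ℝ (Fin n) → EuclideanSpace ℝ (Fin n) → ℝ)
    (hKnonneg : ∀ x y, 0 ≤ K x y)
    (hKmeas : Measurable (Function.uncurry K))
    (hKint : ∀ x ∈ Ω, IntegrableOn (K x) Ω)
    (hKcont : ∀ x ∈ Ω, ∀ ε > (0:ℝ), ∃ δ > (0:ℝ), ∀ x' ∈ Ω, dist x' x < δ →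
        (∫ y in Ω, |K x' y - K x y|) < ε)
    (D : ℝ) (hD : ∀ x ∈ Ω, (∫ y in Ω, K x y) ≤ D)
    (L_K : ℝ) (hKlip : ∀ x ∈ Ω, ∀ x' ∈ Ω, (∫ y in Ω, |K x y - K x' y|) ≤ L_K * dist x x')
    -- `ρ` is a recognition function satisfying the coordination condition:
    (ρ : ℝ → ℝ) (hρ : Differentiable ℝ ρ)
    (hρ'lip : ∀ R : ℝ, 0 < R → ∃ L : ℝ, ∀ a b : ℝ, |a| ≤ R → |b| ≤ R →
        |deriv ρ a - deriv ρ b| ≤ L * |a - b|)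
    (hcoord_pos : ∀ z : ℝ, 0 ≤ z → deriv ρ z ≤ 0)
    (hcoord_neg : ∀ z : ℝ, z ≤ 0 → 0 ≤ deriv ρ z)
    -- `u₀` bounded and Lipschitz with constant `L₀`:
    (u₀ : EuclideanSpace ℝ (Fin n) → ℝ)
    (L₀ : ℝ) (hu₀lip : ∀ x ∈ Ω, ∀ x' ∈ Ω, |u₀ x - u₀ x'| ≤ L₀ * dist x x')
    (M : ℝ) (hu₀bd : ∀ x ∈ Ω, |u₀ x| ≤ M)
    -- `u` solves the IVP on `Ω × [0,T]` with `T < ∞`: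
    (T : ℝ) (hT : 0 < T)
    (u : EuclideanSpace ℝ (Fin n) → ℝ → ℝ)
    (hucont : ContinuousOn (fun p : EuclideanSpace ℝ (Fin n) × ℝ => u p.1 p.2) (Ω ×ˢ Icc 0 T))
    (hubd : ∃ Mu : ℝ, ∀ x ∈ Ω, ∀ t ∈ Icc (0:ℝ) T, |u x t| ≤ Mu)
    (hueq : ∀ x ∈ Ω, ∀ t ∈ Icc (0:ℝ) T,
        u x t = u₀ x + ∫ s in (0:ℝ)..t, ∫ y in Ω, K x y * deriv ρ (u x s - u y s)) :
    ∃ L : ℝ, ∀ x ∈ Ω, ∀ y ∈ Ω, ∀ t ∈ Icc (0:ℝ) T, ∀ s ∈ Icc (0:ℝ) T,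
      |u x t - u y s| ≤ L * (dist x y + |t - s|) :=
  statement7_general n Ω hΩmeas K hKnonneg hKint D hD L_K hKlip ρ hρ'lip u₀ L₀ hu₀lip T u hucont
    hubd hueq
end

section
/- (Discrete maximum principle for the forward Euler scheme.) Let Ω = [0,1]ⁿ, N ∈ ℕ with N ≥ 1, h := 1/N, Ωʰ := {kh : k ∈ {0,…,N}}ⁿ, ⁻Ωʰ := {kh : k ∈ {0,…,N−1}}ⁿ, and τ > 0. Let K : Ω × Ω → ℝ be nonnegative and let D satisfy hⁿ Σ_{y ∈ ⁻Ωʰ} K(x,y) ≤ D for all x ∈ Ωʰ. Let ρ' : ℝ → ℝ satisfy the coordination condition (ρ'(z) ≤ 0 for z ≥ 0, ρ'(z) ≥ 0 for z ≤ 0) and be Lipschitz with constant L_ρ on [−2M₀, 2M₀], where M₀ := max_{x ∈ Ωʰ} |w(x, 0)|. Suppose the grid function w satisfies, for each time index i, w(x, t_{i+1}) = w(x, t_i) + τ hⁿ Σ_{y ∈ ⁻Ωʰ} K(x,y) ρ'(w(x,t_i) − w(y,t_i)), where t_i = iτ. If τ ≤ 1/(L_ρ D), then max_{x ∈ Ωʰ}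 |w(x, t_{i+1})| ≤ max_{x ∈ Ωʰ} |w(x, t_i)| for every i; in particular max_{x,i} |w(x,t_i)| ≤ M₀. -/
open MeasureTheory Set

/-- The grid point with coordinates `(k i) * h`, as a point of Euclidean space. -/
noncomputable def gridPt (n : ℕ) (h : ℝ) {m : ℕ} (k : Fin n → Fin m) :
    EuclideanSpace ℝ (Fin n) :=
  (WithLp.equiv 2 (Fin n → ℝ)).symm fun i => (k i : ℝ) * h

/-- Decomposition of a function satisfying the coordination condition:
`ρ' z = -(a z)` with `0 ≤ a ≤ L` when `|ρ' z| ≤ L |z|`. -/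
lemma coord_decomp (ρ' : ℝ → ℝ)
    (hpos : ∀ z : ℝ, 0 ≤ z → ρ' z ≤ 0) (hneg : ∀ z : ℝ, z ≤ 0 → 0 ≤ ρ' z)
    (L : ℝ) (hL : 0 ≤ L) (z : ℝ) (hz : |ρ' z| ≤ L * |z|) :
    ∃ a : ℝ, 0 ≤ a ∧ a ≤ L ∧ ρ' z = -(a * z) := by
  by_cases hz0 : z = 0
  · refine ⟨0, le_rfl, hL, ?_⟩
    have : ρ' 0 = 0 := le_antisymm (hpos 0 le_rfl) (hneg 0 le_rfl)
    simp [hz0, this]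
  · refine ⟨-ρ' z / z, ?_, ?_, by field_simp⟩
    · rcases lt_or_gt_of_ne hz0 with hlt | hgt
      · have := hneg z hlt.le
        rw [div_nonneg_iff]
        right
        exact ⟨by linarith, hlt.le⟩
      · have := hpos z hgt.le
        exact div_nonneg (by linarith) hgt.le
    · have hzp : 0 < |z| := abs_pos.mpr hz0
      have habs : (-ρ' z / z) * |z| ≤ L * |z| := by
        have h1 : (-ρ' z / z) * |z| = |ρ' z| := by
          rcases lt_or_gt_of_ne hz0 with hlt | hgt
          · have h2 := hneg z hlt.le
            rw [abs_of_nonneg h2, abs_of_neg hlt]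
            field_simp
          · have h2 := hpos z hgt.le
            rw [abs_of_nonpos h2, abs_of_pos hgt]
            field_simp
        rw [h1]; exact hz
      exact le_of_mul_le_mul_right habs hzp

/-- Discrete maximum principle for the forward Euler scheme: on the grids
`Ωʰ = {kh : k ∈ {0,…,N}}ⁿ` and `⁻Ωʰ = {kh : k ∈ {0,…,N−1}}ⁿ` with `h = 1/N`, if `K ≥ 0`,
`hⁿ Σ_{y ∈ ⁻Ωʰ} K(x,y) ≤ D`, `ρ'` satisfies the coordination condition and is `L_ρ`-Lipschitz
on `[−2M₀, 2M₀]` where `M₀` bounds the initial grid data, the grid function `w` follows the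
forward Euler scheme, and `τ ≤ 1/(L_ρ D)`, then the grid sup norm is nonincreasing in time
and in particular all values stay bounded by `M₀`.  (Grid functions are indexed by
`k : Fin n → Fin (N+1)`, the point being `gridPt n h k`; the inner grid `⁻Ωʰ` is indexed by
`k' : Fin n → Fin N`, embedded in `Ωʰ` via `Fin.castSucc`.) -/
theorem statement14
    (n : ℕ) (hn : 1 ≤ n) (N : ℕ) (hN : 1 ≤ N) (h : ℝ) (hh : h = 1 / N)
    (τ : ℝ) (hτpos : 0 < τ)
    -- `K` nonnegative, with discrete `L¹` bound `D`:
    (K : EuclideanSpace ℝ (Fin n) → EuclideanSpace ℝ (Fin n) → ℝ)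
    (hKnonneg : ∀ x y, 0 ≤ K x y)
    (D : ℝ) (hD : ∀ k : Fin n → Fin (N + 1),
        h ^ n * ∑ k' : Fin n → Fin N, K (gridPt n h k) (gridPt n h k') ≤ D)
    -- `ρ'` satisfies the coordination condition:
    (ρ' : ℝ → ℝ)
    (hcoord_pos : ∀ z : ℝ, 0 ≤ z → ρ' z ≤ 0)
    (hcoord_neg : ∀ z : ℝ, z ≤ 0 → 0 ≤ ρ' z)
    -- the grid function `w`, with `M₀` bounding the initial data:
    (w : (Fin n → Fin (N + 1)) → ℕ → ℝ)
    (M₀ : ℝ) (hM₀ : ∀ k, |w k 0| ≤ M₀)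
    -- `L_ρ` a Lipschitz constant for `ρ'` on `[−2M₀, 2M₀]`:
    (L_ρ : ℝ) (hρlip : ∀ a b : ℝ, |a| ≤ 2 * M₀ → |b| ≤ 2 * M₀ →
        |ρ' a - ρ' b| ≤ L_ρ * |a - b|)
    -- the forward Euler scheme:
    (hscheme : ∀ k i, w k (i + 1) = w k i +
        τ * (h ^ n * ∑ k' : Fin n → Fin N,
          K (gridPt n h k) (gridPt n h k') *
            ρ' (w k i - w (fun j => Fin.castSucc (k' j)) i)))
    -- the time step restriction:
    (hτ : τ ≤ 1 / (L_ρ * D)) :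
    (∀ i : ℕ, (⨆ k : Fin n → Fin (N + 1), |w k (i + 1)|) ≤
        ⨆ k : Fin n → Fin (N + 1), |w k i|) ∧
    (∀ i : ℕ, ∀ k : Fin n → Fin (N + 1), |w k i| ≤ M₀) := by
  classical
  have hNpos : (0:ℝ) < N := by exact_mod_cast hN
  have hh0 : 0 < h := by rw [hh]; positivity
  have hDs : ∀ k : Fin n → Fin (N+1),
      0 ≤ h ^ n * ∑ k' : Fin n → Fin N, K (gridPt n h k) (gridPt n h k') := by
    intro k
    have hs : 0 ≤ ∑ k' : Fin n → Fin N, K (gridPt n h k) (gridPt n h k') :=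
      Finset.sum_nonneg fun k' _ => hKnonneg _ _
    positivity
  have hD0 : 0 ≤ D := le_trans (hDs fun _ => 0) (hD fun _ => 0)
  have hLD : 0 < L_ρ * D := by
    by_contra hc
    push_neg at hc
    rcases lt_or_eq_of_le hc with h1 | h1
    · have : 1 / (L_ρ * D) < 0 := div_neg_of_pos_of_neg one_pos h1
      linarith
    · rw [h1] at hτ; simp at hτ; linarith
  have hL0 : 0 < L_ρ := by
    rcases lt_trichotomy L_ρ 0 with h1 | h1 | h1
    · nlinarith
    · rw [h1] at hLD; simp at hLD
    · exact h1
  have hτLD : τ * (L_ρ * D) ≤ 1 := by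
    rw [le_div_iff₀ hLD] at hτ; linarith
  have hM₀0 : 0 ≤ M₀ := le_trans (abs_nonneg _) (hM₀ fun _ => 0)
  -- Key one-step estimate
  have key : ∀ i : ℕ, (∀ k, |w k i| ≤ M₀) →
      ∀ k, |w k (i+1)| ≤ ⨆ k : Fin n → Fin (N + 1), |w k i| := by
    intro i hb k
    set M := ⨆ k : Fin n → Fin (N + 1), |w k i| with hMdef
    have hMle : ∀ k, |w k i| ≤ M := fun k =>
      le_ciSup (f := fun k => |w k i|) (Set.Finite.bddAbove (Set.finite_range _)) k
    have hM0 : 0 ≤ M := (abs_nonneg _).trans (hMle k)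
    have hdabs : ∀ k' : Fin n → Fin N,
        |w k i - w (fun j => Fin.castSucc (k' j)) i| ≤ 2 * M₀ := by
      intro k'
      calc |w k i - w (fun j => Fin.castSucc (k' j)) i|
          ≤ |w k i| + |w (fun j => Fin.castSucc (k' j)) i| := abs_sub _ _
        _ ≤ 2 * M₀ := by linarith [hb k, hb (fun j => Fin.castSucc (k' j))]
    have hρ0 : ρ' 0 = 0 := le_antisymm (hcoord_pos 0 le_rfl) (hcoord_neg 0 le_rfl)
    have hlip0 : ∀ k' : Fin n → Fin N,
        |ρ' (w k i - w (fun j => Fin.castSucc (k' j)) i)|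
          ≤ L_ρ * |w k i - w (fun j => Fin.castSucc (k' j)) i| := by
      intro k'
      have := hρlip (w k i - w (fun j => Fin.castSucc (k' j)) i) 0 (hdabs k')
        (by simp; linarith)
      rwa [hρ0, sub_zero, sub_zero] at this
    choose a ha0 haL hρd using fun k' : Fin n → Fin N =>
      coord_decomp ρ' hcoord_pos hcoord_neg L_ρ hL0.le
        (w k i - w (fun j => Fin.castSucc (k' j)) i) (hlip0 k')
    set c : (Fin n → Fin N) → ℝ :=
      fun k' => τ * h ^ n * K (gridPt n h k) (gridPt n h k') * a k' with hcc
    have hc0 : ∀ k', 0 ≤ c k' := fun k' => by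
      have h1 := hKnonneg (gridPt n h k) (gridPt n h k')
      have h2 := ha0 k'
      simp only [hcc]
      positivity
    have hS0 : 0 ≤ ∑ k' : Fin n → Fin N, c k' :=
      Finset.sum_nonneg fun k' _ => hc0 k'
    have hS1 : ∑ k' : Fin n → Fin N, c k' ≤ 1 := by
      have h1 : ∑ k' : Fin n → Fin N, c k' ≤ ∑ k' : Fin n → Fin N,
          τ * h ^ n * K (gridPt n h k) (gridPt n h k') * L_ρ := by
        apply Finset.sum_le_sum
        intro k' _
        have hK := hKnonneg (gridPt n h k) (gridPt n h k')
        have hnn : (0:ℝ) ≤ τ * h ^ n * K (gridPt n h k) (gridPt n h k') := by positivity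
        simpa only [hcc] using mul_le_mul_of_nonneg_left (haL k') hnn
      have h2 : ∑ k' : Fin n → Fin N,
          τ * h ^ n * K (gridPt n h k) (gridPt n h k') * L_ρ
          = τ * L_ρ * (h ^ n * ∑ k' : Fin n → Fin N, K (gridPt n h k) (gridPt n h k')) := by
        rw [Finset.mul_sum, Finset.mul_sum]
        exact Finset.sum_congr rfl fun k' _ => by ring
      have h3 : τ * L_ρ * (h ^ n * ∑ k' : Fin n → Fin N, K (gridPt n h k) (gridPt n h k'))
          ≤ τ * L_ρ * D := by
        apply mul_le_mul_of_nonneg_left (hD k)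
        positivity
      calc ∑ k' : Fin n → Fin N, c k' ≤ τ * L_ρ * D := by rw [h2] at h1; linarith
        _ = τ * (L_ρ * D) := by ring
        _ ≤ 1 := hτLD
    have heq : w k (i+1) = (1 - ∑ k' : Fin n → Fin N, c k') * w k i +
        ∑ k' : Fin n → Fin N, c k' * w (fun j => Fin.castSucc (k' j)) i := by
      calc w k (i+1)
          = w k i + ∑ k' : Fin n → Fin N,
            (c k' * w (fun j => Fin.castSucc (k' j)) i - c k' * w k i) := by
            rw [hscheme k i, Finset.mul_sum, Finset.mul_sum]
            congr 1
            refine Finset.sum_congr rfl fun k' _ => ?_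
            rw [hρd k']
            simp only [hcc]
            ring
        _ = (1 - ∑ k' : Fin n → Fin N, c k') * w k i +
            ∑ k' : Fin n → Fin N, c k' * w (fun j => Fin.castSucc (k' j)) i := by
            rw [Finset.sum_sub_distrib, sub_mul, one_mul, ← Finset.sum_mul]
            ring
    calc |w k (i+1)|
        ≤ |(1 - ∑ k' : Fin n → Fin N, c k') * w k i| +
          |∑ k' : Fin n → Fin N, c k' * w (fun j => Fin.castSucc (k' j)) i| := by
          rw [heq]; exact abs_add_le _ _
      _ ≤ (1 - ∑ k' : Fin n → Fin N, c k') * M +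
          ∑ k' : Fin n → Fin N, c k' * M := by
          gcongr ?_ + ?_
          · rw [abs_mul, abs_of_nonneg (by linarith : (0:ℝ) ≤ 1 - ∑ k' : Fin n → Fin N, c k')]
            exact mul_le_mul_of_nonneg_left (hMle k) (by linarith)
          · refine le_trans (Finset.abs_sum_le_sum_abs _ _) ?_
            apply Finset.sum_le_sum
            intro k' _
            rw [abs_mul, abs_of_nonneg (hc0 k')]
            exact mul_le_mul_of_nonneg_left (hMle _) (hc0 k')
      _ = M := by rw [← Finset.sum_mul]; ring
  -- All values stay bounded by `M₀`
  have hbdd : ∀ i : ℕ, ∀ k : Fin n → Fin (N + 1), |w k i| ≤ M₀ := by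
    intro i
    induction i with
    | zero => exact hM₀
    | succ i ih =>
      intro k
      exact (key i ih k).trans (ciSup_le ih)
  exact ⟨fun i => ciSup_le fun k => key i (hbdd i) k, hbdd⟩
end

section
/- (Nash equilibria are stationary.) Let Ω ⊆ ℝⁿ be a nonempty measurable set, K an admissible kernel, and ρ a recognition function. Let u : Ω → ℝ be bounded and measurable, and suppose u is a Nash equilibrium: for every x ∈ Ω and every h ∈ ℝ, ∫_Ω K(x,y) ρ(u(x) + h − u(y)) dy ≤ ∫_Ω K(x,y) ρ(u(x) − u(y)) dy. Then u is a stationary solution: ∫_Ω K(x,y) ρ'(u(x) − u(y)) dy = 0 for every x ∈ Ω. -/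
/-!
Player `x`'s payoff after a shift `h`, `W(h) = ∫_Ω K(x,y) ρ(u(x) + h - u(y)) dy`, is maximal at
`h = 0` by the Nash condition. Since `u` is bounded, the arguments of `ρ'` stay in a compact interval,
where the local Lipschitz bound makes `ρ'` bounded; so `K(x,·)` dominates the `h`-derivative of the
integrand, `W'(0)` may be computed under the integral sign, and Fermat's rule gives `W'(0) = 0`.
-/

open MeasureTheory Set

theorem abs_le_abs_zero_add_of_abs_sub_le {f : ℝ → ℝ} {R L : ℝ}
    (hf : ∀ a b : ℝ, |a| ≤ R → |b| ≤ R → |f a - f b| ≤ L * |a - b|) {z : ℝ} (hz : |z| ≤ R) :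
    |f z| ≤ |f 0| + |L| * R := by
  have h0 : |(0 : ℝ)| ≤ R := by simpa using (abs_nonneg z).trans hz
  calc |f z| ≤ |f 0| + |f z - f 0| := by linarith [abs_sub_abs_le_abs_sub (f z) (f 0)]
    _ ≤ |f 0| + L * |z - 0| := by gcongr; exact hf z 0 hz h0
    _ ≤ |f 0| + |L| * R := by
      rw [sub_zero]; gcongr; exact (le_abs_self L).trans (by gcongr)

theorem hasDerivAt_integral_mul_comp_add_zero {α : Type*} [MeasurableSpace α] {μ : Measure α}
    {k v : α → ℝ} {ρ : ℝ → ℝ} {B C : ℝ} (hk : Integrable k μ) (hv : AEStronglyMeasurable v μ)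
    (hv_bd : ∀ᵐ y ∂μ, |v y| ≤ B) (hρ : Differentiable ℝ ρ)
    (hρ'_bd : ∀ z, |z| ≤ B + 1 → |deriv ρ z| ≤ C) :
    HasDerivAt (fun h => ∫ y, k y * ρ (v y + h) ∂μ) (∫ y, k y * deriv ρ (v y) ∂μ) 0 := by
  have hshift : ∀ᵐ y ∂μ, ∀ h ∈ Icc (-1 : ℝ) 1, |v y + h| ≤ B + 1 := by
    filter_upwards [hv_bd] with y hy h hh
    exact (abs_add_le _ _).trans (add_le_add hy (abs_le.mpr hh))
  obtain ⟨Cρ, hCρ⟩ := (isCompact_Icc (a := -(B + 1)) (b := B + 1)).exists_bound_of_continuousOn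
    hρ.continuous.continuousOn
  have hρv : ∀ h : ℝ, AEStronglyMeasurable (fun y => ρ (v y + h)) μ := fun h =>
    hρ.continuous.comp_aestronglyMeasurable (hv.add aestronglyMeasurable_const)
  have hint : Integrable (fun y => k y * ρ (v y + 0)) μ := by
    refine hk.mul_bdd (c := Cρ) (hρv 0) ?_
    filter_upwards [hshift] with y hy
    exact hCρ _ (abs_le.mp (hy 0 (by norm_num)))
  have hderiv := hasDerivAt_integral_of_dominated_loc_of_deriv_le
    (F := fun h y => k y * ρ (v y + h)) (F' := fun h y => k y * deriv ρ (v y + h))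
    (bound := fun y => ‖k y‖ * C)
    (Icc_mem_nhds (by norm_num : (-1 : ℝ) < 0) one_pos)
    (Filter.Eventually.of_forall fun h => hk.aestronglyMeasurable.mul (hρv h)) hint
    (hk.aestronglyMeasurable.mul ((measurable_deriv ρ).comp_aemeasurable
      (hv.aemeasurable.add_const 0)).aestronglyMeasurable)
    (by
      filter_upwards [hshift] with y hy h hh
      rw [norm_mul]
      exact mul_le_mul_of_nonneg_left (hρ'_bd _ (hy h hh)) (norm_nonneg _))
    (hk.norm.mul_const C)
    (Filter.Eventually.of_forall fun y h _ =>
      ((hρ _).hasDerivAt.comp_const_add (v y) h).const_mul (k y))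
  simpa only [add_zero] using hderiv.2

theorem statement16_general
    (n : ℕ) (Ω : Set (EuclideanSpace ℝ (Fin n)))
    (hΩmeas : MeasurableSet Ω)
    -- `K` is an admissible kernel:
    (K : EuclideanSpace ℝ (Fin n) → EuclideanSpace ℝ (Fin n) → ℝ)
    (hKint : ∀ x ∈ Ω, IntegrableOn (K x) Ω)
    -- `ρ` is a recognition function:
    (ρ : ℝ → ℝ) (hρ : Differentiable ℝ ρ)
    (hρ'lip : ∀ R : ℝ, 0 < R → ∃ L : ℝ, ∀ a b : ℝ, |a| ≤ R → |b| ≤ R →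
        |deriv ρ a - deriv ρ b| ≤ L * |a - b|)
    -- `u` bounded and measurable:
    (u : EuclideanSpace ℝ (Fin n) → ℝ)
    (humeas : Measurable u) (M : ℝ) (hubd : ∀ x ∈ Ω, |u x| ≤ M)
    -- `u` is a Nash equilibrium:
    (hNash : ∀ x ∈ Ω, ∀ h : ℝ,
      (∫ y in Ω, K x y * ρ (u x + h - u y)) ≤ ∫ y in Ω, K x y * ρ (u x - u y)) :
    ∀ x ∈ Ω, (∫ y in Ω, K x y * deriv ρ (u x - u y)) = 0 := by
  intro x hx
  have hM : 0 ≤ M := (abs_nonneg _).trans (hubd x hx)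
  obtain ⟨L, hL⟩ := hρ'lip (2 * M + 1) (by linarith)
  have hv_bd : ∀ᵐ y ∂volume.restrict Ω, |u x - u y| ≤ 2 * M := by
    filter_upwards [ae_restrict_mem hΩmeas] with y hy
    linarith [abs_sub (u x) (u y), hubd x hx, hubd y hy]
  have hpayoff := hasDerivAt_integral_mul_comp_add_zero (hKint x hx)
    (measurable_const.sub humeas).aestronglyMeasurable hv_bd hρ
    fun _ => abs_le_abs_zero_add_of_abs_sub_le hL
  refine IsLocalMax.hasDerivAt_eq_zero (Filter.Eventually.of_forall fun h => ?_) hpayoff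
  simpa only [Pi.sub_apply, add_zero, add_sub_right_comm] using hNash x hx h

/-- Nash equilibria are stationary: for an admissible kernel `K` and a
recognition function `ρ`, if the bounded measurable strategy profile `u` is a Nash
equilibrium — no player `x ∈ Ω` can increase their payoff
`∫_Ω K(x,y) ρ(u(x) − u(y)) dy` by shifting their strategy by any `h ∈ ℝ` — then `u` is a
stationary solution: `∫_Ω K(x,y) ρ'(u(x) − u(y)) dy = 0` for every `x ∈ Ω`. -/
theorem statement16
    (n : ℕ) (Ω : Set (EuclideanSpace ℝ (Fin n)))
    (hΩne : Ω.Nonempty) (hΩmeas : MeasurableSet Ω)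
    -- `K` is an admissible kernel:
    (K : EuclideanSpace ℝ (Fin n) → EuclideanSpace ℝ (Fin n) → ℝ)
    (hKnonneg : ∀ x y, 0 ≤ K x y)
    (hKmeas : Measurable (Function.uncurry K))
    (hKint : ∀ x ∈ Ω, IntegrableOn (K x) Ω)
    (hKcont : ∀ x ∈ Ω, ∀ ε > (0:ℝ), ∃ δ > (0:ℝ), ∀ x' ∈ Ω, dist x' x < δ →
        (∫ y in Ω, |K x' y - K x y|) < ε)
    (D : ℝ) (hD : ∀ x ∈ Ω, (∫ y in Ω, K x y) ≤ D)
    -- `ρ` is a recognition function: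
    (ρ : ℝ → ℝ) (hρ : Differentiable ℝ ρ)
    (hρ'lip : ∀ R : ℝ, 0 < R → ∃ L : ℝ, ∀ a b : ℝ, |a| ≤ R → |b| ≤ R →
        |deriv ρ a - deriv ρ b| ≤ L * |a - b|)
    -- `u` bounded and measurable:
    (u : EuclideanSpace ℝ (Fin n) → ℝ)
    (humeas : Measurable u) (M : ℝ) (hubd : ∀ x ∈ Ω, |u x| ≤ M)
    -- `u` is a Nash equilibrium:
    (hNash : ∀ x ∈ Ω, ∀ h : ℝ,
      (∫ y in Ω, K x y * ρ (u x + h - u y)) ≤ ∫ y in Ω, K x y * ρ (u x - u y)) :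
    ∀ x ∈ Ω, (∫ y in Ω, K x y * deriv ρ (u x - u y)) = 0 :=
  statement16_general n Ω hΩmeas K hKint ρ hρ hρ'lip u humeas M hubd hNash
end

section
/- (Continuous stationary solutions are constant.) Let Ω ⊆ ℝⁿ be a bounded, open, connected set. Let K : Ω × Ω → ℝ be measurable with λ ≤ K(x,y) for all x,y ∈ Ω for some λ > 0, and sup_{x∈Ω} ‖K(x,·)‖_{L¹(Ω)} < ∞. Let a > 0 and let ρ' : ℝ → ℝ be Lipschitz continuous with ρ'(z) = 0 for |z| ≥ a, ρ'(0) = 0, ρ'(z) > 0 for z ∈ (−a, 0), and ρ'(z) < 0 for z ∈ (0, a). If u : Ω → ℝ is bounded and continuous and satisfies ∫_Ω K(x,y) ρ'(u(x) − u(y)) dy = 0 for every x ∈ Ω, then u is constant on Ω. -/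
open MeasureTheory Set
open scoped NNReal

/-! Let `s` be the supremum of `u`. If some value `u x₀` had `ρ'(s - u x₀) < 0`, then by continuity
`ρ'(u x - u y) ≤ -c < 0` for `y` in an open neighbourhood `U` of `x₀`, as soon as `u x` is close
enough to `s`; for all other `y` the integrand is at most `K(x,y) L ε` with `ε = s - u x`, since
`ρ'` is nonpositive on `[0, ∞)` and `L`-Lipschitz. Hence `g[u](x) ≤ L ε D - λ c |U| < 0` for `ε`
small, contradicting stationarity. So `u` takes no value in the gap `(s - a, s)`, and a continuous
function on a connected set whose range has such a gap below its supremum is constant. -/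

def IsStationarySolution {X : Type*} [MeasurableSpace X] (μ : Measure X) (Ω : Set X)
    (K : X → X → ℝ) (ρ' : ℝ → ℝ) (u : X → ℝ) : Prop :=
  ∀ x ∈ Ω, ∫ y in Ω, K x y * ρ' (u x - u y) ∂μ = 0

theorem LipschitzWith.apply_le_mul_of_neg_lt {f : ℝ → ℝ} {L : ℝ≥0} (hf : LipschitzWith L f)
    (hnonpos : ∀ z, 0 ≤ z → f z ≤ 0) {ε z : ℝ} (hε : 0 ≤ ε) (hz : -ε < z) : f z ≤ L * ε := by
  rcases le_or_gt 0 z with hz₀ | hz₀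
  · exact (hnonpos z hz₀).trans (by positivity)
  · have hdist := hf.dist_le_mul z 0
    rw [Real.dist_eq, Real.dist_eq, sub_zero, abs_of_neg hz₀] at hdist
    have := hnonpos 0 le_rfl
    nlinarith [le_abs_self (f z - f 0), L.coe_nonneg]

theorem setIntegral_mul_le_sub_measureReal {X : Type*} [MeasurableSpace X] {μ : Measure X}
    {Ω U : Set X} {K φ : X → ℝ} {lam B c : ℝ} (hΩ : MeasurableSet Ω) (hU : MeasurableSet U)
    (hUΩ : U ⊆ Ω) (hUfin : μ U ≠ ⊤) (hKint : IntegrableOn K Ω μ)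
    (hKφint : IntegrableOn (fun y ↦ K y * φ y) Ω μ) (hK : ∀ y ∈ Ω, lam ≤ K y) (hlam : 0 ≤ lam)
    (hB : 0 ≤ B) (hc : 0 ≤ c) (hφΩ : ∀ y ∈ Ω, φ y ≤ B) (hφU : ∀ y ∈ U, φ y ≤ -c) :
    ∫ y in Ω, K y * φ y ∂μ ≤ B * ∫ y in Ω, |K y| ∂μ - lam * c * μ.real U := by
  have hind : IntegrableOn (U.indicator fun _ ↦ lam * c) Ω μ :=
    ((integrableOn_const hUfin).integrable_indicator hU).integrableOn
  calc ∫ y in Ω, K y * φ y ∂μ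
      ≤ ∫ y in Ω, (B * |K y| - U.indicator (fun _ ↦ lam * c) y) ∂μ := by
        refine setIntegral_mono_on hKφint ((hKint.abs.const_mul B).sub hind) hΩ fun y hy ↦ ?_
        have hKy := hK y hy
        rw [abs_of_nonneg (hlam.trans hKy)]
        by_cases hyU : y ∈ U
        · rw [indicator_of_mem hyU]
          nlinarith [hφU y hyU]
        · rw [indicator_of_notMem hyU]
          nlinarith [hφΩ y hy]
    _ = B * ∫ y in Ω, |K y| ∂μ - lam * c * μ.real U := by
        rw [integral_sub (hKint.abs.const_mul B) hind, integral_const_mul,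
          setIntegral_indicator hU, inter_eq_right.2 hUΩ, setIntegral_const, smul_eq_mul]
        ring

theorem IsPreconnected.eq_sSup_of_forall_notMem_Ioo {X : Type*} [TopologicalSpace X]
    {Ω : Set X} {u : X → ℝ} {a : ℝ} (hΩ : IsPreconnected Ω) (hu : ContinuousOn u Ω)
    (hbdd : BddAbove (u '' Ω)) (ha : 0 < a)
    (hgap : ∀ x ∈ Ω, u x ∉ Ioo (sSup (u '' Ω) - a) (sSup (u '' Ω))) :
    ∀ x ∈ Ω, u x = sSup (u '' Ω) := by
  intro x hx
  set s := sSup (u '' Ω)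
  have hle : ∀ y ∈ Ω, u y ≤ s := fun y hy ↦ le_csSup hbdd (mem_image_of_mem u hy)
  obtain ⟨_, ⟨y, hy, rfl⟩, hys⟩ :=
    exists_lt_of_lt_csSup ⟨u x, mem_image_of_mem u hx⟩ (by linarith : s - a < s)
  have hys : u y = s := le_antisymm (hle y hy) (not_lt.1 fun h ↦ hgap y hy ⟨hys, h⟩)
  by_contra hne
  have hxs : u x < s := (hle x hx).lt_of_ne hne
  obtain ⟨z, hz, hzv⟩ : max (u x) (s - a / 2) ∈ u '' Ω :=
    (hΩ.image u hu).Icc_subset (mem_image_of_mem u hx) (mem_image_of_mem u hy)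
      ⟨le_max_left _ _, max_le (by linarith) (by linarith)⟩
  exact hgap z hz (hzv ▸ ⟨by linarith [le_max_right (u x) (s - a / 2)],
    max_lt hxs (by linarith)⟩)

theorem bddAbove_image_of_abs_le {X : Type*} {Ω : Set X} {u : X → ℝ} {M : ℝ}
    (hubd : ∀ x ∈ Ω, |u x| ≤ M) : BddAbove (u '' Ω) :=
  ⟨M, by rintro _ ⟨y, hy, rfl⟩; exact (abs_le.1 (hubd y hy)).2⟩

section Stationary

variable {X : Type*} [TopologicalSpace X] [MeasurableSpace X] [OpensMeasurableSpace X]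
  {μ : Measure X} {Ω : Set X} {K : X → X → ℝ} {ρ' : ℝ → ℝ} {u : X → ℝ} {L : ℝ≥0} {M : ℝ}

theorem integrableOn_mul_comp_sub (hΩ : MeasurableSet Ω)
    (hKint : ∀ x ∈ Ω, IntegrableOn (K x) Ω μ) (hρ : LipschitzWith L ρ') (hu : ContinuousOn u Ω) (hubd : ∀ x ∈ Ω, |u x| ≤ M)
    {x : X} (hx : x ∈ Ω) : IntegrableOn (fun y ↦ K x y * ρ' (u x - u y)) Ω μ := by
  have hmeas : AEStronglyMeasurable (fun y ↦ ρ' (u x - u y)) (μ.restrict Ω) :=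
    (hρ.continuous.measurable.comp_aemeasurable
      (aemeasurable_const.sub (hu.aemeasurable hΩ))).aestronglyMeasurable
  have hbound : ∀ᵐ y ∂μ.restrict Ω, ‖ρ' (u x - u y)‖ ≤ |ρ' 0| + L * (2 * M) := by
    refine (ae_restrict_iff' hΩ).2 (ae_of_all _ fun y hy ↦ ?_)
    have hdist := hρ.dist_le_mul (u x - u y) 0
    rw [Real.dist_eq, Real.dist_eq, sub_zero] at hdist
    have hdiff : |u x - u y| ≤ 2 * M := by
      linarith [abs_sub (u x) (u y), hubd x hx, hubd y hy]
    rw [Real.norm_eq_abs]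
    nlinarith [abs_sub_abs_le_abs_sub (ρ' (u x - u y)) (ρ' 0), L.coe_nonneg]
  exact ((hKint x hx).bdd_mul hmeas hbound).congr (ae_of_all _ fun _ ↦ mul_comm _ _)

theorem IsStationarySolution.mul_measureReal_le {lam D c ε : ℝ} {U : Set X} {x : X}
    (hst : IsStationarySolution μ Ω K ρ' u) (hΩ : MeasurableSet Ω)
    (hKlow : ∀ x ∈ Ω, ∀ y ∈ Ω, lam ≤ K x y) (hlam : 0 ≤ lam)
    (hKint : ∀ x ∈ Ω, IntegrableOn (K x) Ω μ) (hD : ∀ x ∈ Ω, ∫ y in Ω, |K x y| ∂μ ≤ D)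
    (hρ : LipschitzWith L ρ') (hρnonpos : ∀ z, 0 ≤ z → ρ' z ≤ 0) (hu : ContinuousOn u Ω)
    (hubd : ∀ x ∈ Ω, |u x| ≤ M) (hU : MeasurableSet U) (hUΩ : U ⊆ Ω) (hUfin : μ U ≠ ⊤)
    (hc : 0 ≤ c) (hε : 0 ≤ ε) (hx : x ∈ Ω) (hxε : ∀ y ∈ Ω, -ε < u x - u y)
    (hUc : ∀ y ∈ U, ρ' (u x - u y) ≤ -c) :
    lam * c * μ.real U ≤ L * ε * D := by
  have hint := setIntegral_mul_le_sub_measureReal hΩ hU hUΩ hUfin (hKint x hx)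
    (integrableOn_mul_comp_sub hΩ hKint hρ hu hubd hx) (hKlow x hx) hlam (by positivity) hc
    (fun y hy ↦ hρ.apply_le_mul_of_neg_lt hρnonpos hε (hxε y hy)) hUc
  rw [hst x hx] at hint
  have hKD : L * ε * ∫ y in Ω, |K x y| ∂μ ≤ L * ε * D := by gcongr; exact hD x hx
  linarith

variable [μ.IsOpenPosMeasure]

theorem IsStationarySolution.nonneg_apply_sSup_sub {lam D : ℝ}
    (hst : IsStationarySolution μ Ω K ρ' u) (hΩ : IsOpen Ω) (hΩfin : μ Ω ≠ ⊤) (hlam : 0 < lam)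
    (hKlow : ∀ x ∈ Ω, ∀ y ∈ Ω, lam ≤ K x y) (hKint : ∀ x ∈ Ω, IntegrableOn (K x) Ω μ)
    (hD : ∀ x ∈ Ω, ∫ y in Ω, |K x y| ∂μ ≤ D) (hρ : LipschitzWith L ρ')
    (hρnonpos : ∀ z, 0 ≤ z → ρ' z ≤ 0) (hu : ContinuousOn u Ω) (hubd : ∀ x ∈ Ω, |u x| ≤ M)
    {x₀ : X} (hx₀ : x₀ ∈ Ω) :
    0 ≤ ρ' (sSup (u '' Ω) - u x₀) := by
  set s := sSup (u '' Ω)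
  have hle : ∀ y ∈ Ω, u y ≤ s := fun y hy ↦
    le_csSup (bddAbove_image_of_abs_le hubd) (mem_image_of_mem u hy)
  by_contra! hneg
  set t := s - u x₀
  obtain ⟨c, hc, hct⟩ : ∃ c, 0 < c ∧ ρ' t < -c := ⟨-ρ' t / 2, by linarith, by linarith⟩
  obtain ⟨r, hr, hball⟩ := Metric.eventually_nhds_iff.1
    (hρ.continuous.continuousAt.eventually_lt (continuousAt_const (y := -c)) hct)
  set U := Ω ∩ u ⁻¹' Metric.ball (u x₀) (r / 2)
  have hUopen : IsOpen U := hu.isOpen_inter_preimage hΩ Metric.isOpen_ball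
  have hUfin : μ U ≠ ⊤ := ne_top_of_le_ne_top hΩfin (measure_mono inter_subset_left)
  have hUpos : 0 < μ.real U := ENNReal.toReal_pos
    (hUopen.measure_pos μ ⟨x₀, hx₀, Metric.mem_ball_self (by positivity)⟩).ne' hUfin
  have hD₀ : 0 ≤ D := (integral_nonneg fun _ ↦ abs_nonneg _).trans (hD x₀ hx₀)
  obtain ⟨ε₀, hε₀, hε₀D⟩ := exists_pos_mul_lt (mul_pos (mul_pos hlam hc) hUpos) (L * D)
  set ε := min ε₀ (r / 2)
  have hε : 0 < ε := lt_min hε₀ (by positivity)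
  obtain ⟨_, ⟨x, hx, rfl⟩, hxs⟩ :=
    exists_lt_of_lt_csSup ⟨u x₀, mem_image_of_mem u hx₀⟩ (by linarith : s - ε < s)
  have hUc : ∀ y ∈ U, ρ' (u x - u y) ≤ -c := by
    rintro y ⟨-, hy⟩
    rw [mem_preimage, Metric.mem_ball, Real.dist_eq, abs_sub_lt_iff] at hy
    refine (hball ?_).le
    rw [Real.dist_eq, abs_sub_lt_iff]
    constructor <;> linarith [hle x hx, min_le_right ε₀ (r / 2)]
  have hloss := hst.mul_measureReal_le hΩ.measurableSet hKlow hlam.le hKint hD hρ hρnonpos hu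
    hubd hUopen.measurableSet inter_subset_left hUfin hc.le hε.le hx
    (fun y hy ↦ by linarith [hle y hy]) hUc
  have hgain : L * ε * D ≤ L * D * ε₀ := by
    rw [mul_right_comm]; gcongr; exact min_le_left _ _
  linarith

end Stationary

theorem statement18_general
    (n : ℕ) (Ω : Set (EuclideanSpace ℝ (Fin n)))
    (hΩopen : IsOpen Ω) (hΩconn : IsConnected Ω) (hΩbdd : Bornology.IsBounded Ω)
    -- kernel bounded below by `lam > 0` on `Ω × Ω`, uniformly `L¹`-bounded:
    (K : EuclideanSpace ℝ (Fin n) → EuclideanSpace ℝ (Fin n) → ℝ)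
    (lam : ℝ) (hlam : 0 < lam) (hKlow : ∀ x ∈ Ω, ∀ y ∈ Ω, lam ≤ K x y)
    (hKint : ∀ x ∈ Ω, IntegrableOn (K x) Ω)
    (D : ℝ) (hD : ∀ x ∈ Ω, (∫ y in Ω, |K x y|) ≤ D)
    -- the recognition-derivative `ρ'`:
    (a : ℝ) (ha : 0 < a)
    (ρ' : ℝ → ℝ) (L_ρ : ℝ) (hρlip : ∀ z z' : ℝ, |ρ' z - ρ' z'| ≤ L_ρ * |z - z'|)
    (hρsupp : ∀ z : ℝ, a ≤ |z| → ρ' z = 0)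
    (hρzero : ρ' 0 = 0)
    (hρneg : ∀ z : ℝ, 0 < z → z < a → ρ' z < 0)
    -- `u` bounded, continuous, stationary:
    (u : EuclideanSpace ℝ (Fin n) → ℝ)
    (hucont : ContinuousOn u Ω) (M : ℝ) (hubd : ∀ x ∈ Ω, |u x| ≤ M)
    (hstat : ∀ x ∈ Ω, (∫ y in Ω, K x y * ρ' (u x - u y)) = 0) :
    ∀ x ∈ Ω, ∀ x' ∈ Ω, u x = u x' := by
  have hρ : LipschitzWith L_ρ.toNNReal ρ' := .of_dist_le_mul fun z z' ↦ by
    rw [Real.dist_eq, Real.dist_eq, Real.coe_toNNReal']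
    exact (hρlip z z').trans (by gcongr; exact le_max_left _ _)
  have hρnonpos : ∀ z, 0 ≤ z → ρ' z ≤ 0 := by
    intro z hz
    rcases hz.eq_or_lt with rfl | hz
    · exact hρzero.le
    rcases lt_or_ge z a with hza | hza
    · exact (hρneg z hz hza).le
    · exact (hρsupp z (by rwa [abs_of_pos hz])).le
  have hgap : ∀ x ∈ Ω, u x ∉ Ioo (sSup (u '' Ω) - a) (sSup (u '' Ω)) := fun x hx ⟨h₁, h₂⟩ ↦
    (IsStationarySolution.nonneg_apply_sSup_sub hstat hΩopen hΩbdd.measure_lt_top.ne hlam hKlow hKint hD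
      hρ hρnonpos hucont hubd hx).not_gt (hρneg _ (by linarith) (by linarith))
  have hconst := hΩconn.isPreconnected.eq_sSup_of_forall_notMem_Ioo hucont
    (bddAbove_image_of_abs_le hubd) ha hgap
  intro x hx x' hx'
  rw [hconst x hx, hconst x' hx']

/-- Continuous stationary solutions are constant: on a bounded, open,
connected domain `Ω`, with a kernel bounded below by `λ > 0` and with uniformly bounded
`L¹` norms, and `ρ'` Lipschitz, vanishing outside `(−a,a)`, vanishing at `0`, positive on
`(−a,0)` and negative on `(0,a)`, every bounded continuous stationary solution
(`∫_Ω K(x,y) ρ'(u(x) − u(y)) dy = 0` for all `x ∈ Ω`) is constant on `Ω`. -/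
theorem statement18
    (n : ℕ) (Ω : Set (EuclideanSpace ℝ (Fin n)))
    (hΩopen : IsOpen Ω) (hΩconn : IsConnected Ω) (hΩbdd : Bornology.IsBounded Ω)
    -- kernel bounded below by `lam > 0` on `Ω × Ω`, uniformly `L¹`-bounded:
    (K : EuclideanSpace ℝ (Fin n) → EuclideanSpace ℝ (Fin n) → ℝ)
    (hKmeas : Measurable (Function.uncurry K))
    (lam : ℝ) (hlam : 0 < lam) (hKlow : ∀ x ∈ Ω, ∀ y ∈ Ω, lam ≤ K x y)
    (hKint : ∀ x ∈ Ω, IntegrableOn (K x) Ω)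
    (D : ℝ) (hD : ∀ x ∈ Ω, (∫ y in Ω, |K x y|) ≤ D)
    -- the recognition-derivative `ρ'`:
    (a : ℝ) (ha : 0 < a)
    (ρ' : ℝ → ℝ) (L_ρ : ℝ) (hρlip : ∀ z z' : ℝ, |ρ' z - ρ' z'| ≤ L_ρ * |z - z'|)
    (hρsupp : ∀ z : ℝ, a ≤ |z| → ρ' z = 0)
    (hρzero : ρ' 0 = 0)
    (hρpos : ∀ z : ℝ, -a < z → z < 0 → 0 < ρ' z)
    (hρneg : ∀ z : ℝ, 0 < z → z < a → ρ' z < 0)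
    -- `u` bounded, continuous, stationary:
    (u : EuclideanSpace ℝ (Fin n) → ℝ)
    (hucont : ContinuousOn u Ω) (M : ℝ) (hubd : ∀ x ∈ Ω, |u x| ≤ M)
    (hstat : ∀ x ∈ Ω, (∫ y in Ω, K x y * ρ' (u x - u y)) = 0) :
    ∀ x ∈ Ω, ∀ x' ∈ Ω, u x = u x' :=
  statement18_general n Ω hΩopen hΩconn hΩbdd K lam hlam hKlow hKint D hD a ha ρ' L_ρ hρlip hρsupp
    hρzero hρneg u hucont M hubd hstat
end

section
/- (Short time existence and uniqueness for the inhomogeneous problem.) Let Ω ⊆ ℝⁿ be a nonempty measurable set, K an admissible kernel, ρ a recognition function, and u₀ : Ω → ℝ bounded continuous. Let f : ℝ × Ω × [0,∞) → ℝ be continuous, bounded, and Lipschitz continuous in its first argument uniformly in the others: there is L_f ≥ 0 with |f(a,x,t) − f(b,x,t)| ≤ L_f |a − b| for all a, b ∈ ℝ, x ∈ Ω, t ≥ 0. Then there exists T > 0 such that there is exactly one bounded continuous u : Ω × [0,T] → ℝ satisfying u(x,t) = u₀(x) + ∫₀ᵗ ( g[u](x,s) + f(u(x,s), x, s) ) ds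 for all (x,t) ∈ Ω × [0,T]. -/
/-!
Write `F w = g[w] + f(w)` for the right-hand side. Since `ρ'` is Lipschitz and bounded on bounded
intervals and `K(x,·)` has mass at most `D`, on functions bounded by `R` the map `F` is bounded
and is Lipschitz in the supremum over `Ω` at each fixed time, with constants independent of `T`.
Continuity of `x ↦ g[w](x,t)` comes from the `L¹`-continuity of `x ↦ K(x,·)` together with
dominated convergence. For small `T` the Picard map `u ↦ u₀ + ∫₀ᵗ F u` is therefore a contraction
of a closed ball of bounded continuous functions on `Ω × [0,T]`, and Banach's fixed point theorem
gives a solution. Any two bounded continuous solutions lie in a common larger ball, where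
iterating the integral inequality gives `|u - v| ≤ 2R (κt)ᵏ / k!` for every `k`; hence `u = v`.
-/

open MeasureTheory Set Filter Topology

theorem locallyLipschitz_of_forall_abs_sub_le {g : ℝ → ℝ}
    (hg : ∀ R : ℝ, 0 < R → ∃ L : ℝ, ∀ a b : ℝ, |a| ≤ R → |b| ≤ R → |g a - g b| ≤ L * |a - b|) :
    LocallyLipschitz g := by
  intro a
  obtain ⟨L, hL⟩ := hg (|a| + 1) (by positivity)
  refine ⟨L.toNNReal, Icc (-(|a| + 1)) (|a| + 1),
    Icc_mem_nhds (by linarith [neg_abs_le a]) (by linarith [le_abs_self a]),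
    LipschitzOnWith.of_dist_le_mul fun x hx y hy => ?_⟩
  rw [Real.dist_eq, Real.dist_eq]
  exact (hL x y (abs_le.2 hx) (abs_le.2 hy)).trans
    (mul_le_mul_of_nonneg_right (Real.le_coe_toNNReal L) (abs_nonneg _))

theorem sub_mem_Icc_of_abs_le {a b R : ℝ} (ha : |a| ≤ R) (hb : |b| ≤ R) :
    a - b ∈ Icc (-(2 * R)) (2 * R) :=
  abs_le.1 <| (abs_sub _ _).trans (by linarith)

section Cylinder

variable {X : Type*} [TopologicalSpace X]

structure BoundedContinuousOn (Ω : Set X) (T M : ℝ) (w : X → ℝ → ℝ) : Prop where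
  continuousOn : ContinuousOn (fun p : X × ℝ => w p.1 p.2) (Ω ×ˢ Icc 0 T)
  abs_le : ∀ x ∈ Ω, ∀ t ∈ Icc 0 T, |w x t| ≤ M

theorem BoundedContinuousOn.mono {Ω : Set X} {T M M' : ℝ} {w : X → ℝ → ℝ}
    (hw : BoundedContinuousOn Ω T M w) (hM : M ≤ M') : BoundedContinuousOn Ω T M' w :=
  ⟨hw.continuousOn, fun x hx t ht => (hw.abs_le x hx t ht).trans hM⟩

def TimewiseLipschitz (Ω : Set X) (T M κ : ℝ) (F : (X → ℝ → ℝ) → X → ℝ → ℝ) : Prop :=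
  ∀ w₁ w₂, BoundedContinuousOn Ω T M w₁ → BoundedContinuousOn Ω T M w₂ → ∀ s ∈ Icc 0 T,
    ∀ b : ℝ, (∀ y ∈ Ω, |w₁ y s - w₂ y s| ≤ b) → ∀ x ∈ Ω, |F w₁ x s - F w₂ x s| ≤ κ * b

end Cylinder

section Uniqueness

open scoped Nat

variable {X : Type*} [TopologicalSpace X] {Ω : Set X} {T : ℝ}

theorem intervalIntegrable_of_continuousOn_prod_Icc {G : X → ℝ → ℝ}
    (hG : ContinuousOn (fun p : X × ℝ => G p.1 p.2) (Ω ×ˢ Icc 0 T)) {x : X} (hx : x ∈ Ω)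
    {t : ℝ} (ht : t ∈ Icc 0 T) :
    IntervalIntegrable (G x) volume 0 t :=
  ((hG.uncurry_left (f := G) x hx).mono
    (by rw [uIcc_of_le ht.1]; exact Icc_subset_Icc_right ht.2)).intervalIntegrable

theorem integral_mul_pow_div_factorial (c A t : ℝ) (k : ℕ) :
    ∫ s in (0:ℝ)..t, c * (A * (c * s) ^ k / k !) = A * (c * t) ^ (k + 1) / (k + 1)! := by
  have hk : (k ! : ℝ) ≠ 0 := by positivity
  have hintegrand : (fun s : ℝ => c * (A * (c * s) ^ k / k !)) =
      fun s => c ^ (k + 1) * A / k ! * s ^ k := by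
    funext s
    ring
  rw [hintegrand, intervalIntegral.integral_const_mul, integral_pow, Nat.factorial_succ]
  push_cast
  field_simp
  ring

theorem abs_intervalIntegral_le_mul {G : ℝ → ℝ} {C t : ℝ} (ht : t ∈ Icc 0 T)
    (hG : ∀ s ∈ Icc 0 T, |G s| ≤ C) : |∫ s in (0:ℝ)..t, G s| ≤ T * C := by
  have hT : (0:ℝ) ∈ Icc 0 T := ⟨le_rfl, ht.1.trans ht.2⟩
  have hC : 0 ≤ C := (abs_nonneg _).trans (hG 0 hT)
  have h := intervalIntegral.norm_integral_le_of_norm_le_const (f := G) fun s hs =>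
    hG s (uIoc_subset_uIcc.trans (uIcc_subset_Icc hT ht) hs)
  rw [sub_zero, abs_of_nonneg ht.1] at h
  exact h.trans (by nlinarith [ht.2])

theorem BoundedContinuousOn.eqOn_of_integral_eq {F : (X → ℝ → ℝ) → X → ℝ → ℝ} {u₀ : X → ℝ}
    {u v : X → ℝ → ℝ} {R κ : ℝ} (hu : BoundedContinuousOn Ω T R u)
    (hv : BoundedContinuousOn Ω T R v) (hF : TimewiseLipschitz Ω T R κ F)
    (hFu : ContinuousOn (fun p : X × ℝ => F u p.1 p.2) (Ω ×ˢ Icc 0 T))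
    (hFv : ContinuousOn (fun p : X × ℝ => F v p.1 p.2) (Ω ×ˢ Icc 0 T))
    (hueq : ∀ x ∈ Ω, ∀ t ∈ Icc 0 T, u x t = u₀ x + ∫ s in (0:ℝ)..t, F u x s)
    (hveq : ∀ x ∈ Ω, ∀ t ∈ Icc 0 T, v x t = u₀ x + ∫ s in (0:ℝ)..t, F v x s) :
    ∀ x ∈ Ω, ∀ t ∈ Icc 0 T, u x t = v x t := by
  have key (k : ℕ) : ∀ x ∈ Ω, ∀ t ∈ Icc 0 T, |u x t - v x t| ≤ 2 * R * (κ * t) ^ k / k ! := by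
    induction k with
    | zero =>
      intro x hx t ht
      simpa [two_mul] using
        (abs_sub _ _).trans (add_le_add (hu.abs_le x hx t ht) (hv.abs_le x hx t ht))
    | succ k ih =>
      intro x hx t ht
      have hiu := intervalIntegrable_of_continuousOn_prod_Icc hFu hx ht
      have hiv := intervalIntegrable_of_continuousOn_prod_Icc hFv hx ht
      have hdiff : u x t - v x t = ∫ s in (0:ℝ)..t, (F u x s - F v x s) := by
        rw [hueq x hx t ht, hveq x hx t ht, intervalIntegral.integral_sub hiu hiv]
        ring
      calc |u x t - v x t| ≤ ∫ s in (0:ℝ)..t, |F u x s - F v x s| := by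
            rw [hdiff]; exact intervalIntegral.abs_integral_le_integral_abs ht.1
        _ ≤ ∫ s in (0:ℝ)..t, κ * (2 * R * (κ * s) ^ k / k !) := by
            refine intervalIntegral.integral_mono_on ht.1 (hiu.sub hiv).abs
              (Continuous.intervalIntegrable (by fun_prop) _ _) fun s hs => ?_
            have hsT : s ∈ Icc 0 T := ⟨hs.1, hs.2.trans ht.2⟩
            exact hF u v hu hv s hsT _ (fun y hy => ih y hy s hsT) x hx
        _ = 2 * R * (κ * t) ^ (k + 1) / (k + 1)! := integral_mul_pow_div_factorial κ (2 * R) t k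
  intro x hx t ht
  have hlim : Tendsto (fun k : ℕ => 2 * R * (κ * t) ^ k / k !) atTop (𝓝 0) := by
    simpa [mul_div_assoc] using
      (FloorSemiring.tendsto_pow_div_factorial_atTop (κ * t)).const_mul (2 * R)
  exact sub_eq_zero.1 (abs_nonpos_iff.1 (ge_of_tendsto' hlim fun k => key k x hx t ht))

end Uniqueness

section Existence

open scoped BoundedContinuousFunction

variable {X : Type*} [TopologicalSpace X] {Ω : Set X} {T : ℝ}

open scoped Classical in
noncomputable def extendCylinder (u : Ω × Icc (0:ℝ) T →ᵇ ℝ) (x : X) (t : ℝ) : ℝ :=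
  if h : x ∈ Ω ∧ t ∈ Icc 0 T then u (⟨x, h.1⟩, ⟨t, h.2⟩) else 0

theorem extendCylinder_apply (u : Ω × Icc (0:ℝ) T →ᵇ ℝ) {x : X} (hx : x ∈ Ω) {t : ℝ}
    (ht : t ∈ Icc 0 T) : extendCylinder u x t = u (⟨x, hx⟩, ⟨t, ht⟩) :=
  dif_pos ⟨hx, ht⟩

theorem boundedContinuousOn_extendCylinder (u : Ω × Icc (0:ℝ) T →ᵇ ℝ) :
    BoundedContinuousOn Ω T ‖u‖ (extendCylinder u) := by
  refine ⟨?_, fun x hx t ht => by rw [extendCylinder_apply u hx ht]; exact u.norm_coe_le_norm _⟩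
  rw [continuousOn_iff_continuous_domRestrict]
  convert u.continuous.comp (f := fun q : ↥(Ω ×ˢ Icc 0 T) =>
    ((⟨q.1.1, q.2.1⟩ : Ω), (⟨q.1.2, q.2.2⟩ : Icc (0:ℝ) T))) (by fun_prop) using 1
  funext q
  exact extendCylinder_apply u q.2.1 q.2.2

theorem continuous_integral_of_continuousOn_prod_Icc (hT : 0 ≤ T) {G : X → ℝ → ℝ}
    (hG : ContinuousOn (fun p : X × ℝ => G p.1 p.2) (Ω ×ˢ Icc 0 T)) :
    Continuous fun q : Ω × Icc (0:ℝ) T => ∫ s in (0:ℝ)..q.2, G q.1 s := by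
  -- clamping time into `[0,T]` makes the integrand continuous on all of `Ω × ℝ`
  have hclamp : Continuous fun p : Ω × ℝ => G p.1 (projIcc 0 T hT p.2) :=
    hG.comp_continuous (f := fun p : Ω × ℝ => ((p.1 : X), (projIcc 0 T hT p.2 : ℝ)))
      (by fun_prop) fun p => ⟨p.1.2, (projIcc 0 T hT p.2).2⟩
  refine ((intervalIntegral.continuous_parametric_primitive_of_continuous (μ := volume)
    (a₀ := 0) (f := fun (x : Ω) s => G x (projIcc 0 T hT s)) hclamp).comp
      (by fun_prop : Continuous fun q : Ω × Icc (0:ℝ) T => (q.1, (q.2 : ℝ)))).congr fun q => ?_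
  refine intervalIntegral.integral_congr fun s hs => ?_
  rw [uIcc_of_le q.2.2.1] at hs
  simp [projIcc_of_mem hT ⟨hs.1, hs.2.trans q.2.2.2⟩]

theorem exists_boundedContinuousOn_integral_eq {F : (X → ℝ → ℝ) → X → ℝ → ℝ} {u₀ : X → ℝ}
    {M B κ : ℝ} (hT : 0 ≤ T) (hM : 0 ≤ M) (hu₀ : ContinuousOn u₀ Ω)
    (hu₀M : ∀ x ∈ Ω, |u₀ x| + T * B ≤ M)
    (hF : ∀ w, BoundedContinuousOn Ω T M w → BoundedContinuousOn Ω T B (F w))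
    (hFlip : TimewiseLipschitz Ω T M κ F) (hκ : 0 ≤ κ) (hTκ : T * κ < 1) :
    ∃ u, BoundedContinuousOn Ω T M u ∧
      ∀ x ∈ Ω, ∀ t ∈ Icc 0 T, u x t = u₀ x + ∫ s in (0:ℝ)..t, F u x s := by
  let Ball := {u : Ω × Icc (0:ℝ) T →ᵇ ℝ // ‖u‖ ≤ M}
  have hext (u : Ball) : BoundedContinuousOn Ω T M (extendCylinder u.1) :=
    (boundedContinuousOn_extendCylinder u.1).mono u.2
  have hbound (u : Ball) (q : Ω × Icc (0:ℝ) T) :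
      ‖u₀ q.1 + ∫ s in (0:ℝ)..q.2, F (extendCylinder u.1) q.1 s‖ ≤ M :=
    (norm_add_le _ _).trans <| (add_le_add le_rfl (abs_intervalIntegral_le_mul q.2.2
      fun s hs => (hF _ (hext u)).abs_le q.1 q.1.2 s hs)).trans (hu₀M _ q.1.2)
  let Φ : Ball → Ball := fun u =>
    ⟨.ofNormedAddCommGroup _ ((hu₀.comp_continuous (continuous_subtype_val.comp continuous_fst)
      fun q => q.1.2).add (continuous_integral_of_continuousOn_prod_Icc hT
        (hF _ (hext u)).continuousOn)) M (hbound u),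
      BoundedContinuousFunction.norm_ofNormedAddCommGroup_le _ hM _⟩
  have : CompleteSpace Ball := (isClosed_le continuous_norm continuous_const).completeSpace_coe
  have : Nonempty Ball := ⟨⟨0, by simpa using hM⟩⟩
  have hΦ : ContractingWith (T * κ).toNNReal Φ := by
    refine ⟨Real.toNNReal_lt_one.2 hTκ, LipschitzWith.of_dist_le_mul fun u v => ?_⟩
    rw [Real.coe_toNNReal _ (by positivity), Subtype.dist_eq, Subtype.dist_eq]
    refine (BoundedContinuousFunction.dist_le (by positivity)).2 fun q => ?_
    have hdist (s : ℝ) (hs : s ∈ Icc 0 T) (y : X) (hy : y ∈ Ω) :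
        |extendCylinder u.1 y s - extendCylinder v.1 y s| ≤ dist u.1 v.1 := by
      rw [extendCylinder_apply _ hy hs, extendCylinder_apply _ hy hs, ← Real.dist_eq]
      exact BoundedContinuousFunction.dist_coe_le_dist _
    change dist (u₀ q.1 + ∫ s in (0:ℝ)..q.2, F (extendCylinder u.1) q.1 s)
      (u₀ q.1 + ∫ s in (0:ℝ)..q.2, F (extendCylinder v.1) q.1 s) ≤ _
    rw [dist_add_left, dist_eq_norm, ← intervalIntegral.integral_sub
      (intervalIntegrable_of_continuousOn_prod_Icc (hF _ (hext u)).continuousOn q.1.2 q.2.2)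
      (intervalIntegrable_of_continuousOn_prod_Icc (hF _ (hext v)).continuousOn q.1.2 q.2.2)]
    exact (abs_intervalIntegral_le_mul q.2.2 fun s hs =>
      hFlip _ _ (hext u) (hext v) s hs _ (hdist s hs) q.1 q.1.2).trans_eq (by ring)
  set u := ContractingWith.fixedPoint Φ hΦ
  have hfix : Φ u = u := hΦ.fixedPoint_isFixedPt
  refine ⟨extendCylinder u.1, hext u, fun x hx t ht => ?_⟩
  rw [extendCylinder_apply _ hx ht, ← congrArg (fun w : Ball => w.1 (⟨x, hx⟩, ⟨t, ht⟩)) hfix]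
  rfl

end Existence

section Integral

variable {X : Type*} [MeasurableSpace X] {ν : Measure X}

theorem abs_integral_mul_le {κ Ψ : X → ℝ} {C : ℝ} (hκ : Integrable κ ν)
    (hΨ : ∀ᵐ y ∂ν, |Ψ y| ≤ C) :
    |∫ y, κ y * Ψ y ∂ν| ≤ C * ∫ y, |κ y| ∂ν := by
  refine (norm_integral_le_of_norm_le (f := fun y => κ y * Ψ y) (hκ.abs.const_mul C) ?_).trans_eq
    (integral_const_mul C _)
  filter_upwards [hΨ] with y hy
  rw [Real.norm_eq_abs, abs_mul, mul_comm]
  exact mul_le_mul_of_nonneg_right hy (abs_nonneg _)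

/-- Continuity of `κ ↦ ∫ κ Ψ` in `L¹` for uniformly bounded `Ψ`, combined with dominated
convergence in `Ψ`. -/
theorem tendsto_integral_mul_of_tendsto_integral_abs_sub {ι : Type*} {l : Filter ι}
    [l.IsCountablyGenerated] {κ Ψ : ι → X → ℝ} {κ₀ Ψ₀ : X → ℝ} {C : ℝ}
    (hκ : Tendsto (fun i => ∫ y, |κ i y - κ₀ y| ∂ν) l (𝓝 0))
    (hκint : ∀ᶠ i in l, Integrable (κ i) ν) (hκ₀ : Integrable κ₀ ν)
    (hΨmeas : ∀ᶠ i in l, AEStronglyMeasurable (Ψ i) ν)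
    (hΨC : ∀ᶠ i in l, ∀ᵐ y ∂ν, |Ψ i y| ≤ C)
    (hΨ : ∀ᵐ y ∂ν, Tendsto (fun i => Ψ i y) l (𝓝 (Ψ₀ y))) :
    Tendsto (fun i => ∫ y, κ i y * Ψ i y ∂ν) l (𝓝 (∫ y, κ₀ y * Ψ₀ y ∂ν)) := by
  have hvar : Tendsto (fun i => ∫ y, κ i y * Ψ i y ∂ν - ∫ y, κ₀ y * Ψ i y ∂ν) l (𝓝 0) := by
    rw [tendsto_zero_iff_abs_tendsto_zero]
    refine squeeze_zero' (Eventually.of_forall fun _ => abs_nonneg _) ?_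
      (by simpa using hκ.const_mul C)
    filter_upwards [hκint, hΨmeas, hΨC] with i hκi hΨi hCi
    dsimp only [Function.comp_apply]
    rw [← integral_sub (hκi.mul_bdd hΨi hCi) (hκ₀.mul_bdd hΨi hCi)]
    simp_rw [← sub_mul]
    exact abs_integral_mul_le (hκi.sub hκ₀) hCi
  have hdom : Tendsto (fun i => ∫ y, κ₀ y * Ψ i y ∂ν) l (𝓝 (∫ y, κ₀ y * Ψ₀ y ∂ν)) := by
    refine tendsto_integral_filter_of_dominated_convergence (fun y => |κ₀ y| * C)
      (hΨmeas.mono fun i h => hκ₀.aestronglyMeasurable.mul h) ?_ (hκ₀.abs.mul_const C)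
      (hΨ.mono fun y hy => tendsto_const_nhds.mul hy)
    filter_upwards [hΨC] with i hCi
    filter_upwards [hCi] with y hy
    rw [Real.norm_eq_abs, abs_mul]
    exact mul_le_mul_of_nonneg_left hy (abs_nonneg _)
  simpa using hvar.add hdom

end Integral

section Kernel

variable {X : Type*} [TopologicalSpace X] [MeasurableSpace X]

structure IsAdmissibleKernel (μ : Measure X) (Ω : Set X) (K : X → X → ℝ) (D : ℝ) : Prop where
  nonneg : ∀ x y, 0 ≤ K x y
  integrableOn : ∀ x ∈ Ω, IntegrableOn (K x) Ω μ
  tendsto_integral_abs_sub :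
    ∀ x ∈ Ω, Tendsto (fun x' => ∫ y in Ω, |K x' y - K x y| ∂μ) (𝓝[Ω] x) (𝓝 0)
  integral_le : ∀ x ∈ Ω, ∫ y in Ω, K x y ∂μ ≤ D

noncomputable section

/-- The nonlocality `g[v](x) = ∫_Ω K(x,y) φ(v(x) - v(y)) dy`, with `φ = ρ'`. -/
def nonlocalTerm (μ : Measure X) (Ω : Set X) (K : X → X → ℝ) (φ : ℝ → ℝ) (v : X → ℝ)
    (x : X) : ℝ :=
  ∫ y in Ω, K x y * φ (v x - v y) ∂μ

def nonlocalRHS (μ : Measure X) (Ω : Set X) (K : X → X → ℝ) (φ : ℝ → ℝ)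
    (f : ℝ → X → ℝ → ℝ) (w : X → ℝ → ℝ) (x : X) (s : ℝ) : ℝ :=
  nonlocalTerm μ Ω K φ (fun y => w y s) x + f (w x s) x s

end

variable {μ : Measure X} {Ω : Set X} {K : X → X → ℝ} {D : ℝ} {φ : ℝ → ℝ}

theorem IsAdmissibleKernel.abs_setIntegral_mul_le (hK : IsAdmissibleKernel μ Ω K D)
    (hΩ : MeasurableSet Ω) {x : X} (hx : x ∈ Ω) {Ψ : X → ℝ} {C : ℝ} (hC : 0 ≤ C)
    (hΨ : ∀ y ∈ Ω, |Ψ y| ≤ C) :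
    |∫ y in Ω, K x y * Ψ y ∂μ| ≤ C * D := by
  calc |∫ y in Ω, K x y * Ψ y ∂μ| ≤ C * ∫ y in Ω, |K x y| ∂μ :=
        abs_integral_mul_le (hK.integrableOn x hx) (ae_restrict_of_forall_mem hΩ hΨ)
    _ ≤ C * D := by
        simp_rw [abs_of_nonneg (hK.nonneg x _)]
        exact mul_le_mul_of_nonneg_left (hK.integral_le x hx) hC

theorem IsAdmissibleKernel.integrableOn_mul (hK : IsAdmissibleKernel μ Ω K D)
    (hΩ : MeasurableSet Ω) {x : X} (hx : x ∈ Ω) {Ψ : X → ℝ} {C : ℝ}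
    (hΨm : AEStronglyMeasurable Ψ (μ.restrict Ω)) (hΨ : ∀ y ∈ Ω, |Ψ y| ≤ C) :
    IntegrableOn (fun y => K x y * Ψ y) Ω μ :=
  (hK.integrableOn x hx).mul_bdd hΨm (ae_restrict_of_forall_mem hΩ hΨ)

theorem abs_nonlocalTerm_le (hK : IsAdmissibleKernel μ Ω K D) (hΩ : MeasurableSet Ω)
    {v : X → ℝ} {x : X} (hx : x ∈ Ω) {R C : ℝ} (hv : ∀ y ∈ Ω, |v y| ≤ R)
    (hφ : ∀ a ∈ Icc (-(2 * R)) (2 * R), |φ a| ≤ C) :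
    |nonlocalTerm μ Ω K φ v x| ≤ C * D := by
  have hC : 0 ≤ C :=
    (abs_nonneg _).trans (hφ 0 (by simpa using sub_mem_Icc_of_abs_le (hv x hx) (hv x hx)))
  exact hK.abs_setIntegral_mul_le hΩ hx hC fun y hy =>
    hφ _ (sub_mem_Icc_of_abs_le (hv x hx) (hv y hy))

theorem abs_nonlocalTerm_sub_le (hK : IsAdmissibleKernel μ Ω K D) (hΩ : MeasurableSet Ω)
    {v₁ v₂ : X → ℝ} {x : X} (hx : x ∈ Ω) {R b : ℝ} {L : NNReal}
    (hv₁ : AEStronglyMeasurable v₁ (μ.restrict Ω)) (hv₂ : AEStronglyMeasurable v₂ (μ.restrict Ω))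
    (hv₁R : ∀ y ∈ Ω, |v₁ y| ≤ R) (hv₂R : ∀ y ∈ Ω, |v₂ y| ≤ R)
    (hφ : LipschitzOnWith L φ (Icc (-(2 * R)) (2 * R))) (hφc : Continuous φ)
    (hb : ∀ y ∈ Ω, |v₁ y - v₂ y| ≤ b) :
    |nonlocalTerm μ Ω K φ v₁ x - nonlocalTerm μ Ω K φ v₂ x| ≤ 2 * L * D * b := by
  obtain ⟨C, hC⟩ := isCompact_Icc.exists_bound_of_continuousOn
    (hφc.continuousOn (s := Icc (-(2 * R)) (2 * R)))
  have hint : ∀ v : X → ℝ, AEStronglyMeasurable v (μ.restrict Ω) → (∀ y ∈ Ω, |v y| ≤ R) →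
      IntegrableOn (fun y => K x y * φ (v x - v y)) Ω μ := fun v hv hvR =>
    hK.integrableOn_mul hΩ hx (hφc.comp_aestronglyMeasurable (aestronglyMeasurable_const.sub hv))
      fun y hy => hC _ (sub_mem_Icc_of_abs_le (hvR x hx) (hvR y hy))
  have hb0 : 0 ≤ b := (abs_nonneg _).trans (hb x hx)
  rw [nonlocalTerm, nonlocalTerm, ← integral_sub (hint v₁ hv₁ hv₁R) (hint v₂ hv₂ hv₂R)]
  simp_rw [← mul_sub]
  refine (hK.abs_setIntegral_mul_le hΩ hx (C := L * (2 * b)) (by positivity)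
    fun y hy => ?_).trans_eq (by ring)
  calc |φ (v₁ x - v₁ y) - φ (v₂ x - v₂ y)| ≤ L * |(v₁ x - v₁ y) - (v₂ x - v₂ y)| := by
        simpa only [Real.dist_eq] using hφ.dist_le_mul _
          (sub_mem_Icc_of_abs_le (hv₁R x hx) (hv₁R y hy)) _
          (sub_mem_Icc_of_abs_le (hv₂R x hx) (hv₂R y hy))
    _ ≤ L * (2 * b) := by
        gcongr
        calc _ = |(v₁ x - v₂ x) - (v₁ y - v₂ y)| := by ring_nf
          _ ≤ 2 * b := (abs_sub _ _).trans (by linarith [hb x hx, hb y hy])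

end Kernel

theorem IsAdmissibleKernel.of_forall_dist_lt {X : Type*} [PseudoMetricSpace X] [MeasurableSpace X]
    {μ : Measure X} {Ω : Set X} {K : X → X → ℝ} {D : ℝ} (hK0 : ∀ x y, 0 ≤ K x y)
    (hKint : ∀ x ∈ Ω, IntegrableOn (K x) Ω μ)
    (hKcont : ∀ x ∈ Ω, ∀ ε > (0:ℝ), ∃ δ > (0:ℝ), ∀ x' ∈ Ω, dist x' x < δ →
      ∫ y in Ω, |K x' y - K x y| ∂μ < ε)
    (hD : ∀ x ∈ Ω, ∫ y in Ω, K x y ∂μ ≤ D) :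
    IsAdmissibleKernel μ Ω K D := by
  refine ⟨hK0, hKint, fun x hx => Metric.tendsto_nhdsWithin_nhds.2 fun ε hε => ?_, hD⟩
  refine (hKcont x hx ε hε).imp fun δ ⟨hδ, h⟩ => ⟨hδ, fun {x'} hx' hxx' => ?_⟩
  rw [Real.dist_0_eq_abs, abs_of_nonneg (integral_nonneg fun _ => abs_nonneg _)]
  exact h x' hx' hxx'

section Continuity

variable {X : Type*} [TopologicalSpace X] [MeasurableSpace X] [OpensMeasurableSpace X]
  {μ : Measure X} {Ω : Set X} {K : X → X → ℝ} {D : ℝ} {φ : ℝ → ℝ}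

theorem continuousOn_nonlocalTerm [FirstCountableTopology X] (hK : IsAdmissibleKernel μ Ω K D)
    (hΩ : MeasurableSet Ω) (hφ : Continuous φ) {I : Set ℝ} {w : X → ℝ → ℝ} {R : ℝ}
    (hw : ContinuousOn (fun p : X × ℝ => w p.1 p.2) (Ω ×ˢ I))
    (hwR : ∀ x ∈ Ω, ∀ t ∈ I, |w x t| ≤ R) :
    ContinuousOn (fun p : X × ℝ => nonlocalTerm μ Ω K φ (fun y => w y p.2) p.1) (Ω ×ˢ I) := by
  obtain ⟨C, hC⟩ := isCompact_Icc.exists_bound_of_continuousOn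
    (hφ.continuousOn (s := Icc (-(2 * R)) (2 * R)))
  rintro ⟨x, t⟩ ⟨hx, ht⟩
  have hw_at : Tendsto (fun p : X × ℝ => w p.1 p.2) (𝓝[Ω] x ×ˢ 𝓝[I] t) (𝓝 (w x t)) := by
    simpa only [ContinuousWithinAt, nhdsWithin_prod_eq] using hw (x, t) ⟨hx, ht⟩
  have hmem : ∀ᶠ p : X × ℝ in 𝓝[Ω] x ×ˢ 𝓝[I] t, p ∈ Ω ×ˢ I :=
    prod_mem_prod self_mem_nhdsWithin self_mem_nhdsWithin
  simp only [ContinuousWithinAt, nhdsWithin_prod_eq, nonlocalTerm]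
  refine tendsto_integral_mul_of_tendsto_integral_abs_sub (C := C)
    ((hK.tendsto_integral_abs_sub x hx).comp tendsto_fst) ?_ (hK.integrableOn x hx) ?_ ?_
    (ae_restrict_of_forall_mem hΩ fun y hy => ?_)
  · filter_upwards [hmem] with p hp using hK.integrableOn p.1 hp.1
  · filter_upwards [hmem] with p hp
    refine hφ.comp_aestronglyMeasurable (aestronglyMeasurable_const.sub ?_)
    exact (hw.uncurry_right (f := w) p.2 hp.2).aestronglyMeasurable hΩ
  · filter_upwards [hmem] with p hp
    exact ae_restrict_of_forall_mem hΩ fun y hy =>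
      hC _ (sub_mem_Icc_of_abs_le (hwR _ hp.1 _ hp.2) (hwR y hy _ hp.2))
  · exact (hφ.tendsto _).comp
      (hw_at.sub (((hw.uncurry_left (f := w) y hy) t ht).tendsto.comp tendsto_snd))

variable {f : ℝ → X → ℝ → ℝ}

theorem BoundedContinuousOn.continuousOn_nonlocalRHS [FirstCountableTopology X] {T R : ℝ}
    {w : X → ℝ → ℝ} (hw : BoundedContinuousOn Ω T R w) (hK : IsAdmissibleKernel μ Ω K D)
    (hΩ : MeasurableSet Ω) (hφ : Continuous φ)
    (hf : ContinuousOn (fun p : ℝ × X × ℝ => f p.1 p.2.1 p.2.2) (univ ×ˢ Ω ×ˢ Ici 0)) :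
    ContinuousOn (fun p : X × ℝ => nonlocalRHS μ Ω K φ f w p.1 p.2) (Ω ×ˢ Icc 0 T) :=
  (continuousOn_nonlocalTerm hK hΩ hφ hw.continuousOn hw.abs_le).add
    (hf.comp (hw.continuousOn.prodMk continuousOn_id) fun _ hp => ⟨mem_univ _, hp.1, hp.2.1⟩)

theorem exists_boundedContinuousOn_nonlocalRHS [FirstCountableTopology X]
    (hK : IsAdmissibleKernel μ Ω K D)
    (hΩ : MeasurableSet Ω) (hφ : Continuous φ)
    (hf : ContinuousOn (fun p : ℝ × X × ℝ => f p.1 p.2.1 p.2.2) (univ ×ˢ Ω ×ˢ Ici 0))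
    {Bf : ℝ} (hfbd : ∀ c : ℝ, ∀ x ∈ Ω, ∀ t : ℝ, 0 ≤ t → |f c x t| ≤ Bf) (R : ℝ) :
    ∃ B, ∀ T w, BoundedContinuousOn Ω T R w →
      BoundedContinuousOn Ω T B (nonlocalRHS μ Ω K φ f w) := by
  obtain ⟨C, hC⟩ := isCompact_Icc.exists_bound_of_continuousOn
    (hφ.continuousOn (s := Icc (-(2 * R)) (2 * R)))
  refine ⟨C * D + Bf, fun T w hw => ⟨hw.continuousOn_nonlocalRHS hK hΩ hφ hf, fun x hx t ht => ?_⟩⟩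
  exact (abs_add_le _ _).trans (add_le_add
    (abs_nonlocalTerm_le hK hΩ hx (fun y hy => hw.abs_le y hy t ht) hC) (hfbd _ x hx t ht.1))

theorem exists_timewiseLipschitz_nonlocalRHS (hK : IsAdmissibleKernel μ Ω K D)
    (hΩ : MeasurableSet Ω) (hD : 0 ≤ D) (hφ : LocallyLipschitz φ) {L_f : ℝ} (hL_f : 0 ≤ L_f)
    (hflip : ∀ c c' : ℝ, ∀ x ∈ Ω, ∀ t : ℝ, 0 ≤ t → |f c x t - f c' x t| ≤ L_f * |c - c'|)
    (R : ℝ) :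
    ∃ κ, 0 ≤ κ ∧ ∀ T, TimewiseLipschitz Ω T R κ (nonlocalRHS μ Ω K φ f) := by
  obtain ⟨L, hL⟩ := hφ.locallyLipschitzOn.exists_lipschitzOnWith_of_compact
    (isCompact_Icc (a := -(2 * R)) (b := 2 * R))
  refine ⟨2 * L * D + L_f, by positivity, fun T w₁ w₂ hw₁ hw₂ s hs b hb x hx => ?_⟩
  have hslice : ∀ w, BoundedContinuousOn Ω T R w →
      AEStronglyMeasurable (fun y => w y s) (μ.restrict Ω) := fun w hw =>
    (hw.continuousOn.uncurry_right (f := w) s hs).aestronglyMeasurable hΩ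
  have hnonlocal := abs_nonlocalTerm_sub_le hK hΩ hx (hslice w₁ hw₁) (hslice w₂ hw₂)
    (fun y hy => hw₁.abs_le y hy s hs) (fun y hy => hw₂.abs_le y hy s hs) hL hφ.continuous hb
  have hforcing := (hflip _ _ x hx s hs.1).trans (mul_le_mul_of_nonneg_left (hb x hx) hL_f)
  rw [nonlocalRHS, nonlocalRHS, add_sub_add_comm]
  exact (abs_add_le _ _).trans (by linarith)

end Continuity

theorem statement19_general
    (n : ℕ) (Ω : Set (EuclideanSpace ℝ (Fin n)))
    (hΩne : Ω.Nonempty) (hΩmeas : MeasurableSet Ω)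
    -- `K` is an admissible kernel:
    (K : EuclideanSpace ℝ (Fin n) → EuclideanSpace ℝ (Fin n) → ℝ)
    (hKnonneg : ∀ x y, 0 ≤ K x y)
    (hKint : ∀ x ∈ Ω, IntegrableOn (K x) Ω)
    (hKcont : ∀ x ∈ Ω, ∀ ε > (0:ℝ), ∃ δ > (0:ℝ), ∀ x' ∈ Ω, dist x' x < δ →
        (∫ y in Ω, |K x' y - K x y|) < ε)
    (D : ℝ) (hD : ∀ x ∈ Ω, (∫ y in Ω, K x y) ≤ D)
    -- `ρ` is a recognition function:
    (ρ : ℝ → ℝ)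
    (hρ'lip : ∀ R : ℝ, 0 < R → ∃ L : ℝ, ∀ a b : ℝ, |a| ≤ R → |b| ≤ R →
        |deriv ρ a - deriv ρ b| ≤ L * |a - b|)
    -- `u₀` bounded and continuous on `Ω`:
    (u₀ : EuclideanSpace ℝ (Fin n) → ℝ)
    (hu₀cont : ContinuousOn u₀ Ω) (M₀ : ℝ) (hu₀bd : ∀ x ∈ Ω, |u₀ x| ≤ M₀)
    -- `f` continuous, bounded, and uniformly Lipschitz in its first argument:
    (f : ℝ → EuclideanSpace ℝ (Fin n) → ℝ → ℝ)
    (hfcont : ContinuousOn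
        (fun p : ℝ × EuclideanSpace ℝ (Fin n) × ℝ => f p.1 p.2.1 p.2.2)
        (univ ×ˢ Ω ×ˢ Ici 0))
    (Bf : ℝ) (hfbd : ∀ c : ℝ, ∀ x ∈ Ω, ∀ t : ℝ, 0 ≤ t → |f c x t| ≤ Bf)
    (L_f : ℝ) (hL_f : 0 ≤ L_f)
    (hflip : ∀ c c' : ℝ, ∀ x ∈ Ω, ∀ t : ℝ, 0 ≤ t → |f c x t - f c' x t| ≤ L_f * |c - c'|) :
    ∃ T > (0:ℝ), ∃ u : EuclideanSpace ℝ (Fin n) → ℝ → ℝ,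
      (ContinuousOn (fun p : EuclideanSpace ℝ (Fin n) × ℝ => u p.1 p.2) (Ω ×ˢ Icc 0 T) ∧
       (∃ M : ℝ, ∀ x ∈ Ω, ∀ t ∈ Icc (0:ℝ) T, |u x t| ≤ M) ∧
       (∀ x ∈ Ω, ∀ t ∈ Icc (0:ℝ) T,
          u x t = u₀ x + ∫ s in (0:ℝ)..t,
            ((∫ y in Ω, K x y * deriv ρ (u x s - u y s)) + f (u x s) x s))) ∧
      (∀ v : EuclideanSpace ℝ (Fin n) → ℝ → ℝ,
        ContinuousOn (fun p : EuclideanSpace ℝ (Fin n) × ℝ => v p.1 p.2) (Ω ×ˢ Icc 0 T) →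
        (∃ M : ℝ, ∀ x ∈ Ω, ∀ t ∈ Icc (0:ℝ) T, |v x t| ≤ M) →
        (∀ x ∈ Ω, ∀ t ∈ Icc (0:ℝ) T,
          v x t = u₀ x + ∫ s in (0:ℝ)..t,
            ((∫ y in Ω, K x y * deriv ρ (v x s - v y s)) + f (v x s) x s)) →
        ∀ x ∈ Ω, ∀ t ∈ Icc (0:ℝ) T, v x t = u x t) := by
  obtain ⟨x₀, hx₀⟩ := hΩne
  have hK : IsAdmissibleKernel volume Ω K D :=
    .of_forall_dist_lt hKnonneg hKint hKcont hD
  have hD0 : 0 ≤ D := (integral_nonneg fun y => hKnonneg x₀ y).trans (hD x₀ hx₀)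
  have hφ : LocallyLipschitz (deriv ρ) := locallyLipschitz_of_forall_abs_sub_le hρ'lip
  set M := |M₀| + 1
  obtain ⟨B, hB⟩ := exists_boundedContinuousOn_nonlocalRHS hK hΩmeas hφ.continuous hfcont hfbd M
  obtain ⟨κ, hκ, hκlip⟩ := exists_timewiseLipschitz_nonlocalRHS hK hΩmeas hD0 hφ hL_f hflip M
  set T := 1 / (|B| + κ + 1)
  have hT : 0 < T := by positivity
  have hTB : T * B ≤ 1 := by
    rw [div_mul_eq_mul_div, one_mul, div_le_one (by positivity)]
    linarith [le_abs_self B]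
  have hTκ : T * κ < 1 := by
    rw [div_mul_eq_mul_div, one_mul, div_lt_one (by positivity)]
    linarith [abs_nonneg B]
  obtain ⟨u, hu, hueq⟩ := exists_boundedContinuousOn_integral_eq hT.le (by positivity) hu₀cont
    (fun x hx => by linarith [hu₀bd x hx, le_abs_self M₀]) (hB T) (hκlip T) hκ hTκ
  refine ⟨T, hT, u, ⟨hu.continuousOn, ⟨M, hu.abs_le⟩, hueq⟩, fun v hv ⟨Mv, hMv⟩ hveq => ?_⟩
  have hu' := hu.mono (le_max_left M Mv)
  have hv' : BoundedContinuousOn Ω T (max M Mv) v :=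
    ⟨hv, fun x hx t ht => (hMv x hx t ht).trans (le_max_right M Mv)⟩
  obtain ⟨κ', -, hκ'⟩ :=
    exists_timewiseLipschitz_nonlocalRHS hK hΩmeas hD0 hφ hL_f hflip (max M Mv)
  exact hv'.eqOn_of_integral_eq hu' (hκ' T)
    (hv'.continuousOn_nonlocalRHS hK hΩmeas hφ.continuous hfcont)
    (hu'.continuousOn_nonlocalRHS hK hΩmeas hφ.continuous hfcont) hveq hueq

/-- Short time existence and uniqueness for the inhomogeneous problem: for an
admissible kernel `K`, a recognition function `ρ`, a bounded continuous initial datum `u₀`,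
and an inhomogeneity `f : ℝ × Ω × [0,∞) → ℝ` which is continuous, bounded, and Lipschitz in
its first argument uniformly in the others, there exists `T > 0` such that there is exactly
one bounded continuous `u : Ω × [0,T] → ℝ` with
`u(x,t) = u₀(x) + ∫₀ᵗ (g[u](x,s) + f(u(x,s),x,s)) ds` on `Ω × [0,T]`. -/
theorem statement19
    (n : ℕ) (Ω : Set (EuclideanSpace ℝ (Fin n)))
    (hΩne : Ω.Nonempty) (hΩmeas : MeasurableSet Ω)
    -- `K` is an admissible kernel:
    (K : EuclideanSpace ℝ (Fin n) → EuclideanSpace ℝ (Fin n) → ℝ)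
    (hKnonneg : ∀ x y, 0 ≤ K x y)
    (hKmeas : Measurable (Function.uncurry K))
    (hKint : ∀ x ∈ Ω, IntegrableOn (K x) Ω)
    (hKcont : ∀ x ∈ Ω, ∀ ε > (0:ℝ), ∃ δ > (0:ℝ), ∀ x' ∈ Ω, dist x' x < δ →
        (∫ y in Ω, |K x' y - K x y|) < ε)
    (D : ℝ) (hD : ∀ x ∈ Ω, (∫ y in Ω, K x y) ≤ D)
    -- `ρ` is a recognition function:
    (ρ : ℝ → ℝ) (hρ : Differentiable ℝ ρ)
    (hρ'lip : ∀ R : ℝ, 0 < R → ∃ L : ℝ, ∀ a b : ℝ, |a| ≤ R → |b| ≤ R →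
        |deriv ρ a - deriv ρ b| ≤ L * |a - b|)
    -- `u₀` bounded and continuous on `Ω`:
    (u₀ : EuclideanSpace ℝ (Fin n) → ℝ)
    (hu₀cont : ContinuousOn u₀ Ω) (M₀ : ℝ) (hu₀bd : ∀ x ∈ Ω, |u₀ x| ≤ M₀)
    -- `f` continuous, bounded, and uniformly Lipschitz in its first argument:
    (f : ℝ → EuclideanSpace ℝ (Fin n) → ℝ → ℝ)
    (hfcont : ContinuousOn
        (fun p : ℝ × EuclideanSpace ℝ (Fin n) × ℝ => f p.1 p.2.1 p.2.2)
        (univ ×ˢ Ω ×ˢ Ici 0))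
    (Bf : ℝ) (hfbd : ∀ c : ℝ, ∀ x ∈ Ω, ∀ t : ℝ, 0 ≤ t → |f c x t| ≤ Bf)
    (L_f : ℝ) (hL_f : 0 ≤ L_f)
    (hflip : ∀ c c' : ℝ, ∀ x ∈ Ω, ∀ t : ℝ, 0 ≤ t → |f c x t - f c' x t| ≤ L_f * |c - c'|) :
    ∃ T > (0:ℝ), ∃ u : EuclideanSpace ℝ (Fin n) → ℝ → ℝ,
      (ContinuousOn (fun p : EuclideanSpace ℝ (Fin n) × ℝ => u p.1 p.2) (Ω ×ˢ Icc 0 T) ∧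
       (∃ M : ℝ, ∀ x ∈ Ω, ∀ t ∈ Icc (0:ℝ) T, |u x t| ≤ M) ∧
       (∀ x ∈ Ω, ∀ t ∈ Icc (0:ℝ) T,
          u x t = u₀ x + ∫ s in (0:ℝ)..t,
            ((∫ y in Ω, K x y * deriv ρ (u x s - u y s)) + f (u x s) x s))) ∧
      (∀ v : EuclideanSpace ℝ (Fin n) → ℝ → ℝ,
        ContinuousOn (fun p : EuclideanSpace ℝ (Fin n) × ℝ => v p.1 p.2) (Ω ×ˢ Icc 0 T) →
        (∃ M : ℝ, ∀ x ∈ Ω, ∀ t ∈ Icc (0:ℝ) T, |v x t| ≤ M) →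
        (∀ x ∈ Ω, ∀ t ∈ Icc (0:ℝ) T,
          v x t = u₀ x + ∫ s in (0:ℝ)..t,
            ((∫ y in Ω, K x y * deriv ρ (v x s - v y s)) + f (v x s) x s)) →
        ∀ x ∈ Ω, ∀ t ∈ Icc (0:ℝ) T, v x t = u x t) :=
  statement19_general n Ω hΩne hΩmeas K hKnonneg hKint hKcont D hD ρ hρ'lip u₀ hu₀cont M₀ hu₀bd f
    hfcont Bf hfbd L_f hL_f hflip
end
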